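/- arXiv:1804.04551 — 16 statements merged into one kernel-verified Lean document; each statement's English description precedes it below -/
import Mathlib

section
/- Let (R, m) be a commutative noetherian local ring, I an ideal of R and M an R-module. Then the following are equivalent: (i) I•M = γ_I(M); (ii) every R-linear map f : I → M has image contained in I•M; (iii) the map Hom_R(I, M) → Hom_R(I, M/IM) given by post-composition with the quotient map M → M/IM is the zero map. Moreover, if I is a principal ideal, these are further equivalent to (iv) I•M = { x ∈ M : Ann_R(I)•x = 0 }. -/
namespace Submodule

variable {R M : Type*} [CommRing R] [AddCommGroup M] [Module R M]

theorem smul_top_le_iSup_range (I : Ideal R) :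
    I • (⊤ : Submodule R M) ≤ ⨆ f : I →ₗ[R] M, LinearMap.range f := by
  rw [smul_le]
  intro a ha m _
  exact le_iSup (fun f : I →ₗ[R] M => LinearMap.range f)
    (LinearMap.toSpanSingleton R M m ∘ₗ I.subtype) ⟨⟨a, ha⟩, rfl⟩

theorem smul_top_eq_iSup_range_iff (I : Ideal R) :
    I • (⊤ : Submodule R M) = (⨆ f : I →ₗ[R] M, LinearMap.range f) ↔
      ∀ f : I →ₗ[R] M, LinearMap.range f ≤ I • (⊤ : Submodule R M) :=
  ⟨fun h f => h ▸ le_iSup (fun f : I →ₗ[R] M => LinearMap.range f) f,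
    fun h => le_antisymm (smul_top_le_iSup_range I) (iSup_le h)⟩

theorem iSup_range_le_torsionBySet_annihilator (I : Ideal R) :
    (⨆ f : I →ₗ[R] M, LinearMap.range f) ≤ torsionBySet R M I.annihilator := by
  refine iSup_le fun f => ?_
  rintro _ ⟨y, rfl⟩
  rw [mem_torsionBySet_iff]
  rintro ⟨a, ha⟩
  have hay : a • y = 0 := Subtype.ext (mem_annihilator.mp ha _ y.2)
  rw [← map_smul, hay, map_zero]

/-- `Ideal.span {c} ≅ R ⧸ Ann(c)`, so any `x` killed by `Ann(c)` is the image of `c` under some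
map `Ideal.span {c} → M`. -/
theorem torsionBySet_annihilator_le_iSup_range (c : R) :
    torsionBySet R M (Ideal.span {c}).annihilator ≤
      ⨆ f : Ideal.span {c} →ₗ[R] M, LinearMap.range f := by
  intro x hx
  have hker : Ideal.torsionOf R R c ≤ LinearMap.ker (LinearMap.toSpanSingleton R M x) := by
    intro r hr
    rw [← Ideal.annihilator_span_singleton_eq_torsionOf] at hr
    exact (mem_torsionBySet_iff _ _).mp hx ⟨r, hr⟩
  let f : Ideal.span {c} →ₗ[R] M :=
    (Ideal.torsionOf R R c).liftQ _ hker ∘ₗ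
      (Ideal.quotTorsionOfEquivSpanSingleton R R c).symm.toLinearMap
  refine le_iSup (fun f : Ideal.span {c} →ₗ[R] M => LinearMap.range f) f
    ⟨⟨c, Ideal.mem_span_singleton_self c⟩, ?_⟩
  have hc : (Ideal.quotTorsionOfEquivSpanSingleton R R c) (Quotient.mk 1) =
      ⟨c, Ideal.mem_span_singleton_self c⟩ := by
    rw [Ideal.quotTorsionOfEquivSpanSingleton_apply_mk, one_smul]
  simp only [f, LinearMap.comp_apply, LinearEquiv.coe_coe, ← hc, LinearEquiv.symm_apply_apply,
    liftQ_apply, LinearMap.toSpanSingleton_apply, one_smul]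

theorem iSup_range_span_singleton_eq_torsionBySet_annihilator (c : R) :
    (⨆ f : Ideal.span {c} →ₗ[R] M, LinearMap.range f) =
      torsionBySet R M (Ideal.span {c}).annihilator :=
  le_antisymm (iSup_range_le_torsionBySet_annihilator _)
    (torsionBySet_annihilator_le_iSup_range c)

end Submodule

theorem iExcellent_tfae_general {R : Type u} [CommRing R]
    (I : Ideal R) (M : Type v) [AddCommGroup M] [Module R M] :
    (List.TFAE
      [I • (⊤ : Submodule R M) = ⨆ f : I →ₗ[R] M, LinearMap.range f,
       ∀ f : I →ₗ[R] M, LinearMap.range f ≤ I • (⊤ : Submodule R M),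
       ∀ f : I →ₗ[R] M, (I • (⊤ : Submodule R M)).mkQ.comp f = 0]) ∧
    ((∃ c : R, I = Ideal.span {c}) →
      ((I • (⊤ : Submodule R M) = ⨆ f : I →ₗ[R] M, LinearMap.range f) ↔
        I • (⊤ : Submodule R M) = Submodule.torsionBySet R M (Submodule.annihilator I))) := by
  refine ⟨?_, ?_⟩
  · tfae_have 1 ↔ 2 := Submodule.smul_top_eq_iSup_range_iff I
    tfae_have 2 ↔ 3 := forall_congr' fun f => by
      rw [← LinearMap.range_le_ker_iff, Submodule.ker_mkQ]
    tfae_finish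
  · rintro ⟨c, rfl⟩
    rw [Submodule.iSup_range_span_singleton_eq_torsionBySet_annihilator]

/-- Proposition 1.2: For an ideal `I` of a commutative noetherian local ring `R` and an
`R`-module `M`, the following are equivalent: (i) `I•M = γ_I(M)` (`M` is `I`-excellent);
(ii) every `f : I →ₗ M` has image contained in `I•M`; (iii) the composition
`Hom(I,M) → Hom(I, M/IM)` is zero. If `I` is principal, these are equivalent to
(iv) `I•M = M[Ann_R(I)]`. -/
theorem iExcellent_tfae {R : Type u} [CommRing R] [IsNoetherianRing R] [IsLocalRing R]
    (I : Ideal R) (M : Type v) [AddCommGroup M] [Module R M] :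
    (List.TFAE
      [I • (⊤ : Submodule R M) = ⨆ f : I →ₗ[R] M, LinearMap.range f,
       ∀ f : I →ₗ[R] M, LinearMap.range f ≤ I • (⊤ : Submodule R M),
       ∀ f : I →ₗ[R] M, (I • (⊤ : Submodule R M)).mkQ.comp f = 0]) ∧
    ((∃ c : R, I = Ideal.span {c}) →
      ((I • (⊤ : Submodule R M) = ⨆ f : I →ₗ[R] M, LinearMap.range f) ↔
        I • (⊤ : Submodule R M) = Submodule.torsionBySet R M (Submodule.annihilator I))) :=
  iExcellent_tfae_general I M
end

section
/- Let (R, m) be a commutative noetherian local ring and I an ideal of R. (a) If (M_λ)_{λ∈Λ} is a family of I-excellent R-modules, then the direct product ∏_λ M_λ and the direct sum ⊕_λ M_λ are I-excellent. (b) If M is an I-excellent R-module and U ⊆ M is a pure submodule (i.e. for every R-module N the induced map N ⊗_R U → N ⊗_R M is injective), then U is I-excellent. -/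
/-!
A module `M` is `I`-excellent iff every map `I → M` lands in `I • M`, so excellence descends
along any family of maps `M → Pᵢ` into `I`-excellent modules that jointly reflect membership in
`I • (-)`. The projections of a product reflect it because `I` is finitely generated, the
components of a direct sum always do, and a pure inclusion `U → N` does because
`R ⧸ I ⊗ M ≅ M ⧸ I • M`.
-/

open DirectSum TensorProduct

namespace Ideal

variable {R : Type*} [CommRing R] (I : Ideal R)

def IsExcellent (M : Type*) [AddCommGroup M] [Module R M] : Prop :=
  I • (⊤ : Submodule R M) = ⨆ f : I →ₗ[R] M, LinearMap.range f

variable {I} {M : Type*} [AddCommGroup M] [Module R M]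

theorem smul_top_le_iSup_range : I • (⊤ : Submodule R M) ≤ ⨆ f : I →ₗ[R] M, LinearMap.range f :=
  Submodule.smul_le.2 fun r hr m _ =>
    le_iSup (fun f : I →ₗ[R] M => LinearMap.range f)
      ((LinearMap.toSpanSingleton R M m).comp I.subtype) ⟨⟨r, hr⟩, rfl⟩

theorem isExcellent_iff : I.IsExcellent M ↔ ∀ f : I →ₗ[R] M, LinearMap.range f ≤ I • ⊤ :=
  ⟨fun h f => h ▸ le_iSup (fun f : I →ₗ[R] M => LinearMap.range f) f,
    fun h => le_antisymm smul_top_le_iSup_range (iSup_le h)⟩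

theorem IsExcellent.of_forall_mem_smul_top {ι : Type*} {P : ι → Type*}
    [∀ i, AddCommGroup (P i)] [∀ i, Module R (P i)] (φ : ∀ i, M →ₗ[R] P i)
    (hP : ∀ i, I.IsExcellent (P i))
    (hφ : ∀ x, (∀ i, φ i x ∈ I • (⊤ : Submodule R (P i))) → x ∈ I • (⊤ : Submodule R M)) :
    I.IsExcellent M := by
  refine isExcellent_iff.2 fun f => ?_
  rintro _ ⟨x, rfl⟩
  exact hφ _ fun i => isExcellent_iff.1 (hP i) (φ i ∘ₗ f) ⟨x, rfl⟩

theorem IsExcellent.of_mem_smul_top {P : Type*} [AddCommGroup P] [Module R P] (φ : M →ₗ[R] P)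
    (hP : I.IsExcellent P)
    (hφ : ∀ x, φ x ∈ I • (⊤ : Submodule R P) → x ∈ I • (⊤ : Submodule R M)) :
    I.IsExcellent M :=
  of_forall_mem_smul_top (fun _ : Unit => φ) (fun _ => hP) fun x hx => hφ x (hx ())

end Ideal

namespace Submodule

variable {R : Type*} [CommRing R] {I : Ideal R}

theorem mem_smul_top_iff_exists_sum {M : Type*} [AddCommGroup M] [Module R M] {s : Finset R}
    (hs : Ideal.span (s : Set R) = I) {x : M} :
    x ∈ I • (⊤ : Submodule R M) ↔ ∃ c : s → M, ∑ a : s, a.1 • c a = x := by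
  rw [← hs, span_smul_eq, smul_top_eq_range_lsum, LinearMap.mem_range]
  refine (Finsupp.equivFunOnFinite (α := (s : Set R)) (M := M)).exists_congr_left.trans ?_
  simp [Finsupp.sum_fintype]

theorem mem_smul_top_pi {ι : Type*} {M : ι → Type*} [∀ i, AddCommGroup (M i)]
    [∀ i, Module R (M i)] (hI : I.FG) {x : ∀ i, M i}
    (hx : ∀ i, x i ∈ I • (⊤ : Submodule R (M i))) : x ∈ I • (⊤ : Submodule R (∀ i, M i)) := by
  obtain ⟨s, hs⟩ := hI
  choose c hc using fun i => (mem_smul_top_iff_exists_sum hs).1 (hx i)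
  refine (mem_smul_top_iff_exists_sum hs).2 ⟨fun a i => c i a, funext fun i => ?_⟩
  simpa using hc i

theorem mem_smul_top_directSum {ι : Type*} {M : ι → Type*}
    [∀ i, AddCommGroup (M i)] [∀ i, Module R (M i)] {x : ⨁ i, M i}
    (hx : ∀ i, component R ι M i x ∈ I • (⊤ : Submodule R (M i))) :
    x ∈ I • (⊤ : Submodule R (⨁ i, M i)) := by
  classical
  rw [← DirectSum.sum_support_of x]
  exact sum_mem fun i _ => smul_top_le_comap_smul_top I (lof R ι M i) (hx i)

end Submodule

section Tensor

variable {R : Type*} [CommRing R] (I : Ideal R) {M : Type*} [AddCommGroup M] [Module R M]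

theorem TensorProduct.one_tmul_eq_zero_iff_mem_smul_top (x : M) :
    (1 : R ⧸ I) ⊗ₜ[R] x = 0 ↔ x ∈ I • (⊤ : Submodule R M) := by
  rw [← (quotTensorEquivQuotSMul M I).map_eq_zero_iff, ← map_one (Ideal.Quotient.mk I),
    quotTensorEquivQuotSMul_mk_tmul, one_smul, Submodule.Quotient.mk_eq_zero]

variable {I} in
theorem LinearMap.mem_smul_top_of_lTensor_injective {N : Type*} [AddCommGroup N] [Module R N]
    {φ : M →ₗ[R] N} (hφ : Function.Injective (φ.lTensor (R ⧸ I))) {x : M}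
    (hx : φ x ∈ I • (⊤ : Submodule R N)) : x ∈ I • (⊤ : Submodule R M) := by
  rw [← one_tmul_eq_zero_iff_mem_smul_top] at hx ⊢
  exact hφ (by rwa [map_zero, lTensor_tmul])

end Tensor

theorem iExcellent_closure_general {R : Type u} [CommRing R] [IsNoetherianRing R]
    (I : Ideal R) {Λ : Type u} (M : Λ → Type u)
    [∀ l, AddCommGroup (M l)] [∀ l, Module R (M l)]
    (hM : ∀ l, I • (⊤ : Submodule R (M l)) = ⨆ f : I →ₗ[R] M l, LinearMap.range f)
    (N : Type u) [AddCommGroup N] [Module R N]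
    (hN : I • (⊤ : Submodule R N) = ⨆ f : I →ₗ[R] N, LinearMap.range f)
    (U : Submodule R N)
    (hU : ∀ (P : Type u) [AddCommGroup P] [Module R P],
      Function.Injective (LinearMap.lTensor P U.subtype)) :
    (I • (⊤ : Submodule R (∀ l, M l)) = ⨆ f : I →ₗ[R] (∀ l, M l), LinearMap.range f) ∧
    (I • (⊤ : Submodule R (⨁ l, M l)) = ⨆ f : I →ₗ[R] (⨁ l, M l), LinearMap.range f) ∧
    (I • (⊤ : Submodule R U) = ⨆ f : I →ₗ[R] U, LinearMap.range f) := by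
  have hI : I.FG := IsNoetherian.noetherian I
  refine ⟨?_, ?_, ?_⟩
  · exact Ideal.IsExcellent.of_forall_mem_smul_top LinearMap.proj hM fun _ =>
      Submodule.mem_smul_top_pi hI
  · exact Ideal.IsExcellent.of_forall_mem_smul_top (component R Λ M) hM fun _ =>
      Submodule.mem_smul_top_directSum
  · exact Ideal.IsExcellent.of_mem_smul_top U.subtype hN fun _ =>
      LinearMap.mem_smul_top_of_lTensor_injective (hU (R ⧸ I))

/-- Folgerung 1.4: The family of `I`-excellent modules (those with `I•M = γ_I(M)`) is closed
under direct products, direct sums, and pure submodules. -/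
theorem iExcellent_closure {R : Type u} [CommRing R] [IsNoetherianRing R] [IsLocalRing R]
    (I : Ideal R) {Λ : Type u} (M : Λ → Type u)
    [∀ l, AddCommGroup (M l)] [∀ l, Module R (M l)]
    (hM : ∀ l, I • (⊤ : Submodule R (M l)) = ⨆ f : I →ₗ[R] M l, LinearMap.range f)
    (N : Type u) [AddCommGroup N] [Module R N]
    (hN : I • (⊤ : Submodule R N) = ⨆ f : I →ₗ[R] N, LinearMap.range f)
    (U : Submodule R N)
    (hU : ∀ (P : Type u) [AddCommGroup P] [Module R P],
      Function.Injective (LinearMap.lTensor P U.subtype)) :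
    (I • (⊤ : Submodule R (∀ l, M l)) = ⨆ f : I →ₗ[R] (∀ l, M l), LinearMap.range f) ∧
    (I • (⊤ : Submodule R (⨁ l, M l)) = ⨆ f : I →ₗ[R] (⨁ l, M l), LinearMap.range f) ∧
    (I • (⊤ : Submodule R U) = ⨆ f : I →ₗ[R] U, LinearMap.range f) :=
  iExcellent_closure_general I M hM N hN U hU
end

section
/- Let (R, m) be a commutative noetherian local ring, M an R-module, and (I_λ)_{λ∈Λ} a family of ideals of R. If M is I_λ-excellent for every λ ∈ Λ, then M is (∑_λ I_λ)-excellent, where ∑_λ I_λ denotes the ideal generated by all the I_λ. -/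
/-!
`I • M ≤ γ_I(M)` holds for every ideal, via the maps `x ↦ x • m`. Conversely, the range of a map on
`J = ⨆ λ, I_λ` is generated by the ranges of its restrictions to the `I_λ`, which lie in
`γ_{I_λ}(M) = I_λ • M ≤ J • M`.
-/

namespace Submodule

variable {R M N : Type*} [Semiring R] [AddCommMonoid M] [Module R M] [AddCommMonoid N] [Module R N]

theorem iSup_comap_subtype_iSup_eq_top {ι : Sort*} (p : ι → Submodule R M) :
    ⨆ i, (p i).comap (⨆ i, p i).subtype = ⊤ := by
  refine map_injective_of_injective (⨆ i, p i).injective_subtype ?_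
  rw [map_iSup, map_top, range_subtype]
  exact iSup_congr fun i ↦ by rw [map_comap_eq, range_subtype, inf_eq_right.mpr (le_iSup p i)]

theorem range_eq_iSup_range_comp_inclusion {ι : Sort*} (p : ι → Submodule R M)
    (f : ↥(⨆ i, p i) →ₗ[R] N) :
    LinearMap.range f = ⨆ i, LinearMap.range (f ∘ₗ inclusion (le_iSup p i)) := by
  simp_rw [LinearMap.range_comp, range_inclusion, ← map_iSup, iSup_comap_subtype_iSup_eq_top,
    map_top]

end Submodule

theorem Ideal.smul_top_le_iSup_range_s3 {R : Type*} [CommSemiring R] (M : Type*) [AddCommMonoid M]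
    [Module R M] (I : Ideal R) :
    I • (⊤ : Submodule R M) ≤ ⨆ f : I →ₗ[R] M, LinearMap.range f := by
  rw [Submodule.smul_le]
  intro r hr m _
  exact Submodule.mem_iSup_of_mem ((LinearMap.toSpanSingleton R M m).comp I.subtype)
    ⟨⟨r, hr⟩, rfl⟩

theorem iExcellent_iSup_general {R : Type u} [CommRing R]
    (M : Type v) [AddCommGroup M] [Module R M] {Λ : Type w} (I : Λ → Ideal R)
    (hM : ∀ l, I l • (⊤ : Submodule R M) = ⨆ f : I l →ₗ[R] M, LinearMap.range f) :
    (⨆ l, I l) • (⊤ : Submodule R M) = ⨆ f : ↥(⨆ l, I l) →ₗ[R] M, LinearMap.range f := by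
  refine le_antisymm (Ideal.smul_top_le_iSup_range_s3 M _) (iSup_le fun f ↦ ?_)
  rw [Submodule.range_eq_iSup_range_comp_inclusion I f]
  refine iSup_le fun l ↦ ?_
  calc LinearMap.range (f ∘ₗ Submodule.inclusion (le_iSup I l))
      ≤ ⨆ g : I l →ₗ[R] M, LinearMap.range g := le_iSup (fun g ↦ LinearMap.range g) _
    _ = I l • ⊤ := (hM l).symm
    _ ≤ (⨆ l, I l) • ⊤ := Submodule.smul_mono_left (le_iSup I l)

/-- Folgerung 1.5: If `M` is `I_λ`-excellent (i.e. `I_λ•M = γ_{I_λ}(M)`) for every member of a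
family of ideals `(I_λ)`, then `M` is `(∑_λ I_λ)`-excellent. -/
theorem iExcellent_iSup {R : Type u} [CommRing R] [IsNoetherianRing R] [IsLocalRing R]
    (M : Type v) [AddCommGroup M] [Module R M] {Λ : Type w} (I : Λ → Ideal R)
    (hM : ∀ l, I l • (⊤ : Submodule R M) = ⨆ f : I l →ₗ[R] M, LinearMap.range f) :
    (⨆ l, I l) • (⊤ : Submodule R M) = ⨆ f : ↥(⨆ l, I l) →ₗ[R] M, LinearMap.range f :=
  iExcellent_iSup_general M I hM
end

section
/- Let (R, m) be a commutative noetherian local ring, I an ideal of R, X an R-module and Y ⊆ X a submodule. Let (Y :_X I) = { u ∈ X : I•u ⊆ Y } and let α : (Y :_X I) → Hom_R(I, Y) be the R-linear map defined by α(u)(r) = r•u. Then: (1) if Hom_R(R/I, X) = 0, then α is injective; (2) if Ext^1_R(R/I, X) = 0, then α is surjective. -/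
open CategoryTheory

/-- For a submodule `Y` of `X` and an ideal `I`, the submodule `(Y :_X I) = {u ∈ X | I•u ⊆ Y}`. -/
def colonSub {R : Type u} [CommRing R] {X : Type v} [AddCommGroup X] [Module R X]
    (Y : Submodule R X) (I : Ideal R) : Submodule R X where
  carrier := {u | ∀ r ∈ I, r • u ∈ Y}
  add_mem' := by
    intro a b ha hb r hr
    rw [smul_add]
    exact Y.add_mem (ha r hr) (hb r hr)
  zero_mem' := by
    intro r hr
    simp
  smul_mem' := by
    intro c u hu r hr
    rw [smul_comm]
    exact Y.smul_mem c (hu r hr)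

/-- The map `α : (Y :_X I) → Hom_R(I, Y)` defined by `α(u)(r) = r • u`. -/
def alphaMap {R : Type u} [CommRing R] {X : Type v} [AddCommGroup X] [Module R X]
    (Y : Submodule R X) (I : Ideal R) : ↥(colonSub Y I) →ₗ[R] (I →ₗ[R] Y) where
  toFun u :=
    { toFun := fun r => ⟨(r : R) • (u : X), u.2 r r.2⟩
      map_add' := by
        intro r s
        apply Subtype.ext
        simp [add_smul]
      map_smul' := by
        intro c r
        apply Subtype.ext
        simp [mul_smul] }
  map_add' := by
    intro u v
    refine LinearMap.ext fun r => Subtype.ext ?_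
    simp [smul_add]
  map_smul' := by
    intro c u
    refine LinearMap.ext fun r => Subtype.ext ?_
    simpa using smul_comm (r : R) c (u : X)

/-!
Injectivity: if `α(u) = 0` then `I` kills `u`, so `r + I ↦ r • u` is a map `R/I → X`, which
must vanish. Surjectivity: computing `Ext¹(R/I, X)` with a projective resolution of `R/I`, its
vanishing says that every `f : I → Y ⊆ X` extends to `g : R → X`; then `u = g 1` lies in
`(Y :_X I)` and `α(u) = f`.
-/

namespace CategoryTheory.ProjectiveResolution

variable {R : Type*} [Ring R] {C : Type*} [Category C] [Abelian C] [Linear R C]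
  [EnoughProjectives C] {M N : C}

theorem exists_d_comp_eq_of_subsingleton_ext (P : ProjectiveResolution M)
    [Subsingleton (((Ext R C 1).obj (Opposite.op M)).obj N)]
    (φ : P.complex.X 1 ⟶ N) (hφ : P.complex.d 2 1 ≫ φ = 0) :
    ∃ ψ : P.complex.X 0 ⟶ N, P.complex.d 1 0 ≫ ψ = φ := by
  let K := P.complex.linearYonedaObj R N
  have : Subsingleton (K.homology 1) := (P.isoExt 1 N).toLinearEquiv.symm.subsingleton
  have hK : (K.sc' 0 1 2).Exact :=
    (K.exactAt_iff' 0 1 2 (by simp) (by simp)).1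
      ((K.exactAt_iff_isZero_homology 1).2 (ModuleCat.isZero_of_subsingleton _))
  exact (ShortComplex.moduleCat_exact_iff _).1 hK φ hφ

end CategoryTheory.ProjectiveResolution

theorem Ideal.exists_extension_of_subsingleton_ext {R : Type u} [CommRing R] (I : Ideal R)
    (X : Type u) [AddCommGroup X] [Module R X]
    [Subsingleton (((Ext R (ModuleCat.{u} R) 1).obj
      (Opposite.op (ModuleCat.of R (R ⧸ I)))).obj (ModuleCat.of R X))]
    (f : I →ₗ[R] X) : ∃ g : R →ₗ[R] X, ∀ x : I, g x = f x := by
  let P := projectiveResolution (ModuleCat.of R (R ⧸ I))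
  let π₀ : P.complex.X 0 ⟶ ModuleCat.of R (R ⧸ I) := P.π.f 0
  have : Epi π₀ := inferInstanceAs (Epi (P.π.f 0))
  have : Epi (ModuleCat.ofHom I.mkQ) := (ModuleCat.epi_iff_surjective _).2 I.mkQ_surjective
  let b : P.complex.X 0 →ₗ[R] R := (Projective.factorThru π₀ (ModuleCat.ofHom I.mkQ)).hom
  have hb (p : P.complex.X 0) : Submodule.Quotient.mk (b p) = π₀ p :=
    ConcreteCategory.congr_hom (Projective.factorThru_comp π₀ (ModuleCat.ofHom I.mkQ)) p
  let d : P.complex.X 1 →ₗ[R] P.complex.X 0 := (P.complex.d 1 0).hom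
  have hbd (p : P.complex.X 1) : b (d p) ∈ I := by
    rw [← Submodule.Quotient.mk_eq_zero, hb]
    exact ConcreteCategory.congr_hom P.complex_d_comp_π_f_zero p
  -- `f ∘ b ∘ d` is a 1-cocycle of `Hom(P, X)`; a primitive `ψ`, corrected at a lift `p₀` of
  -- `1 + I`, gives the extension.
  let φ : P.complex.X 1 ⟶ ModuleCat.of R X :=
    ModuleCat.ofHom (f ∘ₗ LinearMap.codRestrict I (b ∘ₗ d) hbd)
  obtain ⟨ψ, hψ⟩ := P.exists_d_comp_eq_of_subsingleton_ext (R := R) φ (by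
    ext p
    have hdd : d (P.complex.d 2 1 p) = 0 :=
      ConcreteCategory.congr_hom (P.complex.d_comp_d 2 1 0) p
    exact (congrArg f (Subtype.ext ((congrArg b hdd).trans b.map_zero))).trans f.map_zero)
  have hψ' (p : P.complex.X 1) : ψ (d p) = f ⟨b (d p), hbd p⟩ := ConcreteCategory.congr_hom hψ p
  obtain ⟨p₀, hp₀⟩ := (ModuleCat.epi_iff_surjective π₀).1 inferInstance (Submodule.Quotient.mk 1)
  have he : b p₀ - 1 ∈ I := by
    rw [← Submodule.Quotient.mk_eq_zero, Submodule.Quotient.mk_sub, hb]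
    exact sub_eq_zero.2 hp₀
  refine ⟨LinearMap.toSpanSingleton R X (ψ p₀ - f ⟨_, he⟩), fun x => ?_⟩
  obtain ⟨p, hp⟩ := (ShortComplex.moduleCat_exact_iff _).1 P.exact₀ ((x : R) • p₀) (by
    change π₀ ((x : R) • p₀) = 0
    rw [map_smul, hp₀, ← Submodule.Quotient.mk_smul, smul_eq_mul, mul_one,
      Submodule.Quotient.mk_eq_zero]
    exact x.2)
  change d p = (x : R) • p₀ at hp
  calc (x : R) • (ψ p₀ - f ⟨_, he⟩) = ψ (d p) - f (x • ⟨_, he⟩) := by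
        rw [smul_sub, ← map_smul, ← map_smul, hp]; rfl
    _ = f (⟨b (d p), hbd p⟩ - x • ⟨_, he⟩) := by rw [hψ', map_sub]
    _ = f x := congrArg f (Subtype.ext (by simp [hp]; ring))

section alphaMap

variable {R : Type u} [CommRing R] {X : Type v} [AddCommGroup X] [Module R X]
  (Y : Submodule R X) (I : Ideal R)

@[simp]
theorem alphaMap_apply_coe (u : colonSub Y I) (r : I) :
    ((alphaMap Y I u r : Y) : X) = (r : R) • (u : X) :=
  rfl

theorem eq_zero_of_smul_eq_zero_of_forall_quotient_linearMap_eq_zero {I : Ideal R}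
    (h : ∀ f : (R ⧸ I) →ₗ[R] X, f = 0) {x : X} (hx : ∀ r ∈ I, r • x = 0) : x = 0 := by
  have hker : I ≤ LinearMap.ker (LinearMap.toSpanSingleton R X x) := hx
  have h1 := LinearMap.congr_fun (h (I.liftQ _ hker)) (Submodule.Quotient.mk 1)
  rwa [Submodule.liftQ_apply, LinearMap.toSpanSingleton_apply, one_smul] at h1

theorem alphaMap_injective (h : ∀ f : (R ⧸ I) →ₗ[R] X, f = 0) :
    Function.Injective (alphaMap Y I) := by
  refine (injective_iff_map_eq_zero _).2 fun u hu => Subtype.ext ?_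
  refine eq_zero_of_smul_eq_zero_of_forall_quotient_linearMap_eq_zero h fun r hr => ?_
  simpa using congrArg (fun g => ((g ⟨r, hr⟩ : Y) : X)) hu

end alphaMap

theorem alphaMap_surjective {R : Type u} [CommRing R] (X : Type u) [AddCommGroup X] [Module R X]
    (Y : Submodule R X) (I : Ideal R)
    [Subsingleton (((Ext R (ModuleCat.{u} R) 1).obj
      (Opposite.op (ModuleCat.of R (R ⧸ I)))).obj (ModuleCat.of R X))] :
    Function.Surjective (alphaMap Y I) := by
  intro f
  obtain ⟨g, hg⟩ := I.exists_extension_of_subsingleton_ext X (Y.subtype ∘ₗ f)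
  have hg' (r : I) : (r : R) • g 1 = f r := by rw [← map_smul, smul_eq_mul, mul_one, hg]; rfl
  exact ⟨⟨g 1, fun r hr => hg' ⟨r, hr⟩ ▸ (f ⟨r, hr⟩).2⟩, LinearMap.ext fun r => Subtype.ext (hg' r)⟩

theorem alphaMap_injective_and_surjective_general
    {R : Type u} [CommRing R]
    (X : Type u) [AddCommGroup X] [Module R X] (Y : Submodule R X) (I : Ideal R) :
    ((∀ f : (R ⧸ I) →ₗ[R] X, f = 0) → Function.Injective (alphaMap Y I)) ∧
    (Subsingleton (((Ext R (ModuleCat.{u} R) 1).obj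
        (Opposite.op (ModuleCat.of R (R ⧸ I)))).obj (ModuleCat.of R X)) →
      Function.Surjective (alphaMap Y I)) :=
  ⟨alphaMap_injective Y I, fun _ => alphaMap_surjective X Y I⟩

/-- Lemma 1.8: (1) if `Hom_R(R/I, X) = 0` then `α` is injective;
(2) if `Ext¹_R(R/I, X) = 0` then `α` is surjective. -/
theorem alphaMap_injective_and_surjective
    {R : Type u} [CommRing R] [IsNoetherianRing R] [IsLocalRing R]
    (X : Type u) [AddCommGroup X] [Module R X] (Y : Submodule R X) (I : Ideal R) :
    ((∀ f : (R ⧸ I) →ₗ[R] X, f = 0) → Function.Injective (alphaMap Y I)) ∧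
    (Subsingleton (((Ext R (ModuleCat.{u} R) 1).obj
        (Opposite.op (ModuleCat.of R (R ⧸ I)))).obj (ModuleCat.of R X)) →
      Function.Surjective (alphaMap Y I)) :=
  alphaMap_injective_and_surjective_general X Y I
end

section
/- Let (R, m) be a commutative noetherian local ring, I an ideal of R, and M ⊆ X an extension of R-modules with Ext^1_R(R/I, X) = 0. Then: (a) γ_I(M) = I•(M :_X I); (b) M is I-excellent if and only if ((I•M) :_X I) = (M :_X I). -/
open CategoryTheory

/-
Vanishing of `Ext¹(R/I, X)`, computed on a projective resolution of `R/I` whose degree-zero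
term is `R` itself, says that every `R`-linear map `I → X` is multiplication by some `m ∈ X`.
If the map lands in `M`, that `m` lies in `(M :_X I)`, so its image lies in `I • (M :_X I)`;
conversely every `u ∈ (M :_X I)` gives the map `i ↦ i • u : I → M`. This is (a). Part (b)
then follows from the Galois connection `I • N ≤ Y ↔ N ≤ (Y :_X I)`.
-/

open CategoryTheory.Limits

namespace CategoryTheory

variable {C : Type*} [Category C] [Abelian C] [EnoughProjectives C] {B Z : C}

lemma Projective.d_comp (p : B ⟶ Z) : Projective.d p ≫ p = 0 :=
  (Category.assoc _ _ _).trans (by rw [kernel.condition]; exact comp_zero)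

namespace ProjectiveResolution

noncomputable def syzygyStep {X₀ X₁ : C} (f : X₁ ⟶ X₀) :
    Σ' (X₂ : C) (d : X₂ ⟶ X₁), d ≫ f = 0 :=
  ⟨_, Projective.d f, Projective.d_comp f⟩

/-- As `ProjectiveResolution.ofComplex`, but with the prescribed degree-zero term `B`. -/
noncomputable def complexOfEpi (p : B ⟶ Z) : ChainComplex C ℕ :=
  ChainComplex.mk' B (Projective.syzygies p) (Projective.d p) syzygyStep

lemma complexOfEpi_d_one_zero (p : B ⟶ Z) : (complexOfEpi p).d 1 0 = Projective.d p :=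
  ChainComplex.mk'_d_1_0 ..

lemma complexOfEpi_exactAt_succ (p : B ⟶ Z) (n : ℕ) : (complexOfEpi p).ExactAt (n + 1) := by
  rw [HomologicalComplex.exactAt_iff' _ (n + 1 + 1) (n + 1) n (by simp) (by simp)]
  refine (ShortComplex.exact_iff_of_iso ?_).1 (exact_d_f ((complexOfEpi p).d (n + 1) n))
  exact ShortComplex.isoMk (ChainComplex.mk'XIso B _ _ syzygyStep n).symm
    (Iso.refl _) (Iso.refl _)
    (((Iso.inv_comp_eq _).2 (ChainComplex.mk'_d _ _ _ _ n)).trans (Category.comp_id _).symm)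
    ((Category.id_comp _).trans (Category.comp_id _).symm)

instance [Projective B] (p : B ⟶ Z) (n : ℕ) : Projective ((complexOfEpi p).X n) := by
  obtain (_ | _ | _ | n) := n
  · assumption
  all_goals apply Projective.projective_over

noncomputable def ofEpi [Projective B] (p : B ⟶ Z) [Epi p] : ProjectiveResolution Z where
  complex := complexOfEpi p
  π := (ChainComplex.toSingle₀Equiv _ _).symm
    ⟨p, (complexOfEpi_d_one_zero p).symm ▸ Projective.d_comp p⟩
  quasiIso := ⟨fun n => by
    cases n
    · rw [ChainComplex.quasiIsoAt₀_iff, ShortComplex.quasiIso_iff_of_zeros']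
      · refine (ShortComplex.exact_and_epi_g_iff_of_iso ?_).2
          ⟨exact_d_f p, by dsimp; infer_instance⟩
        exact ShortComplex.isoMk (Iso.refl _) (Iso.refl _) (Iso.refl _)
          ((Category.id_comp _).trans
            ((complexOfEpi_d_one_zero p).symm.trans (Category.comp_id _).symm))
          ((Category.id_comp _).trans ((ChainComplex.toSingle₀Equiv_symm_apply_f_zero
            (C := complexOfEpi p) p _).symm.trans (Category.comp_id _).symm))
      all_goals rfl
    · rw [quasiIsoAt_iff_exactAt']
      · apply complexOfEpi_exactAt_succ
      · apply ChainComplex.exactAt_succ_single_obj⟩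

variable (R : Type*) [Ring R] [Linear R C]

lemma exists_d_comp_eq_of_subsingleton_ext_one (P : ProjectiveResolution Z) {Y : C}
    (hY : Subsingleton (((Ext R C 1).obj (Opposite.op Z)).obj Y))
    (φ : P.complex.X 1 ⟶ Y) (hφ : P.complex.d 2 1 ≫ φ = 0) :
    ∃ g : P.complex.X 0 ⟶ Y, P.complex.d 1 0 ≫ g = φ := by
  let K := P.complex.linearYonedaObj R Y
  have hK : IsZero (K.homology 1) :=
    IsZero.of_iso (ModuleCat.isZero_of_subsingleton _) (P.isoExt 1 Y).symm
  have hexact := (HomologicalComplex.exactAt_iff' K 0 1 2 (by simp) (by simp)).1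
    ((HomologicalComplex.exactAt_iff_isZero_homology _ _).2 hK)
  exact (ShortComplex.moduleCat_exact_iff _).1 hexact φ hφ

lemma exists_kernel_ι_comp_eq_of_subsingleton_ext_one [Projective B] (p : B ⟶ Z) [Epi p]
    {Y : C} (hY : Subsingleton (((Ext R C 1).obj (Opposite.op Z)).obj Y)) (φ : kernel p ⟶ Y) :
    ∃ g : B ⟶ Y, kernel.ι p ≫ g = φ := by
  let P := ofEpi p
  -- typed through the objects of `P.complex`, so that the rewrites below stay well typed
  let π : P.complex.X 1 ⟶ kernel p := Projective.π (kernel p)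
  let ι : kernel p ⟶ P.complex.X 0 := kernel.ι p
  have : Epi π := inferInstanceAs (Epi (Projective.π (kernel p)))
  have : Mono ι := inferInstanceAs (Mono (kernel.ι p))
  have hd : P.complex.d 1 0 = π ≫ ι := complexOfEpi_d_one_zero p
  have hπ : P.complex.d 2 1 ≫ π = 0 := by
    rw [← cancel_mono ι, zero_comp, Category.assoc, ← hd, P.complex.d_comp_d]
  obtain ⟨g, hg⟩ := P.exists_d_comp_eq_of_subsingleton_ext_one R hY (π ≫ φ)
    (by rw [reassoc_of% hπ, zero_comp])
  have hιg : ι ≫ g = φ := by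
    rw [← cancel_epi π, ← Category.assoc, ← hd, hg]
  exact ⟨g, hιg⟩

end ProjectiveResolution

lemma ShortComplex.ShortExact.exists_f_comp_eq_of_subsingleton_ext_one (R : Type*) [Ring R]
    [Linear R C] {S : ShortComplex C} (hS : S.ShortExact) [Projective S.X₂] {Y : C}
    (hY : Subsingleton (((Ext R C 1).obj (Opposite.op S.X₃)).obj Y)) (φ : S.X₁ ⟶ Y) :
    ∃ g : S.X₂ ⟶ Y, S.f ≫ g = φ := by
  have := hS.mono_f
  have := hS.epi_g
  let k : kernel S.g ⟶ S.X₁ := hS.exact.lift (kernel.ι S.g) (kernel.condition S.g)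
  have hk : kernel.lift S.g S.f S.zero ≫ k = 𝟙 _ := by
    rw [← cancel_mono S.f, Category.assoc, hS.exact.lift_f, kernel.lift_ι, Category.id_comp]
  obtain ⟨g, hg⟩ :=
    ProjectiveResolution.exists_kernel_ι_comp_eq_of_subsingleton_ext_one R S.g hY (k ≫ φ)
  refine ⟨g, ?_⟩
  rw [← kernel.lift_ι S.g S.f S.zero, Category.assoc, hg, ← Category.assoc, hk,
    Category.id_comp]

end CategoryTheory

section Colon

variable {R X : Type*} [CommRing R] [AddCommGroup X] [Module R X] {I : Ideal R}
  {M N Y : Submodule R X}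

lemma smul_le_iff_le_colonSub : I • N ≤ Y ↔ N ≤ colonSub Y I :=
  Submodule.smul_le.trans ⟨fun h _ hu r hr => h r hr _ hu, fun h r hr _ hu => h hu r hr⟩

lemma smul_colonSub_le : I • colonSub Y I ≤ Y :=
  smul_le_iff_le_colonSub.2 le_rfl

lemma le_colonSub : Y ≤ colonSub Y I :=
  fun _ hu r _ => Y.smul_mem r hu

lemma colonSub_mono (h : N ≤ Y) : colonSub N I ≤ colonSub Y I :=
  fun _ hu r hr => h (hu r hr)

lemma smul_colonSub_eq_smul_iff :
    I • colonSub M I = I • M ↔ colonSub (I • M) I = colonSub M I := by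
  constructor
  · intro h
    exact le_antisymm (colonSub_mono Submodule.smul_le_right) (smul_le_iff_le_colonSub.1 h.le)
  · intro h
    refine le_antisymm ?_ (Submodule.smul_mono le_rfl le_colonSub)
    rw [← h]
    exact smul_colonSub_le

variable (I M)

lemma smul_colonSub_le_iSup_map_range :
    I • colonSub M I ≤ ⨆ f : I →ₗ[R] M, Submodule.map M.subtype (LinearMap.range f) := by
  refine Submodule.smul_le.2 fun r hr u hu => ?_
  let f : I →ₗ[R] M :=
    (LinearMap.toSpanSingleton R X u ∘ₗ I.subtype).codRestrict M fun i => hu i i.2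
  exact Submodule.mem_iSup_of_mem f ⟨f ⟨r, hr⟩, ⟨⟨r, hr⟩, rfl⟩, rfl⟩

lemma iSup_map_range_le_smul_colonSub
    (hext : ∀ f : I →ₗ[R] X, ∃ m : X, ∀ i : I, f i = (i : R) • m) :
    ⨆ f : I →ₗ[R] M, Submodule.map M.subtype (LinearMap.range f) ≤ I • colonSub M I := by
  refine iSup_le fun f => ?_
  obtain ⟨m, hm⟩ := hext (M.subtype ∘ₗ f)
  have hm_mem : m ∈ colonSub M I := fun r hr => hm ⟨r, hr⟩ ▸ (f ⟨r, hr⟩).2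
  rintro _ ⟨_, ⟨i, rfl⟩, rfl⟩
  exact hm i ▸ Submodule.smul_mem_smul i.2 hm_mem

end Colon

universe u

lemma Ideal.exists_smul_eq_of_subsingleton_ext_one {R : Type u} [CommRing R] (I : Ideal R)
    {X : Type u} [AddCommGroup X] [Module R X]
    (hX : Subsingleton (((Ext R (ModuleCat.{u} R) 1).obj
        (Opposite.op (ModuleCat.of R (R ⧸ I)))).obj (ModuleCat.of R X)))
    (f : I →ₗ[R] X) : ∃ m : X, ∀ i : I, f i = (i : R) • m := by
  let S : ShortComplex (ModuleCat.{u} R) :=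
    ModuleCat.shortComplexOfCompEqZero I.subtype I.mkQ
      (LinearMap.exact_subtype_mkQ I).linearMap_comp_eq_zero
  have hS : S.ShortExact := ModuleCat.shortComplex_shortExact S (LinearMap.exact_subtype_mkQ I)
    I.injective_subtype I.mkQ_surjective
  have : Projective S.X₂ := inferInstanceAs (Projective (ModuleCat.of R R))
  obtain ⟨g, hg⟩ := hS.exists_f_comp_eq_of_subsingleton_ext_one R hX (ModuleCat.ofHom f)
  refine ⟨g (1 : R), fun i => ?_⟩
  calc f i = g (i : R) := (ConcreteCategory.congr_hom hg i).symm
    _ = (i : R) • g (1 : R) := by rw [← map_smul, smul_eq_mul, mul_one]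

theorem trace_eq_smul_colon_general {R : Type u} [CommRing R]
    (I : Ideal R) (X : Type u) [AddCommGroup X] [Module R X] (M : Submodule R X)
    (hX : Subsingleton (((Ext R (ModuleCat.{u} R) 1).obj
        (Opposite.op (ModuleCat.of R (R ⧸ I)))).obj (ModuleCat.of R X))) :
    ((⨆ f : I →ₗ[R] M, Submodule.map M.subtype (LinearMap.range f)) = I • colonSub M I) ∧
    ((I • M = ⨆ f : I →ₗ[R] M, Submodule.map M.subtype (LinearMap.range f)) ↔
      colonSub (I • M) I = colonSub M I) := by
  have htrace : (⨆ f : I →ₗ[R] M, Submodule.map M.subtype (LinearMap.range f)) =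
      I • colonSub M I :=
    le_antisymm
      (iSup_map_range_le_smul_colonSub I M (I.exists_smul_eq_of_subsingleton_ext_one hX))
      (smul_colonSub_le_iSup_map_range I M)
  refine ⟨htrace, ?_⟩
  rw [htrace, eq_comm]
  exact smul_colonSub_eq_smul_iff

/-- Proposition 1.9: Let `M ⊆ X` be an extension of `R`-modules with `Ext¹_R(R/I, X) = 0`.
Then (a) `γ_I(M) = I•(M :_X I)`, where `γ_I(M)` is the trace of `I` in `M` viewed inside `X`;
(b) `M` is `I`-excellent (`I•M = γ_I(M)`) iff `((I•M) :_X I) = (M :_X I)`. -/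
theorem trace_eq_smul_colon {R : Type u} [CommRing R] [IsNoetherianRing R] [IsLocalRing R]
    (I : Ideal R) (X : Type u) [AddCommGroup X] [Module R X] (M : Submodule R X)
    (hX : Subsingleton (((Ext R (ModuleCat.{u} R) 1).obj
        (Opposite.op (ModuleCat.of R (R ⧸ I)))).obj (ModuleCat.of R X))) :
    ((⨆ f : I →ₗ[R] M, Submodule.map M.subtype (LinearMap.range f)) = I • colonSub M I) ∧
    ((I • M = ⨆ f : I →ₗ[R] M, Submodule.map M.subtype (LinearMap.range f)) ↔
      colonSub (I • M) I = colonSub M I) :=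
  trace_eq_smul_colon_general I X M hX
end

section
/- Let (R, m) be a commutative noetherian local ring, I an ideal of R, and M ⊆ X an extension of R-modules with Hom_R(R/I, X) = 0 and Ext^1_R(R/I, X) = 0. Then there is an isomorphism of R-modules Ext^1_R(R/I, M) ≅ (M :_X I)/M. -/
open CategoryTheory

/-! The short exact sequence `0 → M → X → X/M → 0` gives, on `Hom` complexes out of a projective
resolution of `R/I`, an exact sequence `Hom(R/I, X) → Hom(R/I, X/M) → Ext¹(R/I, M) → Ext¹(R/I, X)`
whose outer terms vanish, so the connecting map is an isomorphism
`Hom(R/I, X/M) ≅ Ext¹(R/I, M)`. A map `R/I → X/M` is determined by the image of `1`, which can be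
any element of `X/M` killed by `I`, and those elements form `(M :_X I)/M`. -/

open Limits Opposite

universe v

namespace CategoryTheory

instance preservesLimits_linearYonedaObj {R : Type*} [Ring R] {C : Type*} [Category.{v} C]
    [Preadditive C] [Linear R C] (Y : C) : PreservesLimits ((linearYoneda R C).obj Y) :=
  have : PreservesLimits ((linearYoneda R C).obj Y ⋙ forget _) :=
    (inferInstance : PreservesLimits (yoneda.obj Y))
  preservesLimits_of_reflects_of_preserves _ (forget _)

end CategoryTheory

namespace ChainComplex

variable {R : Type*} [Ring R] {C : Type*} [Category.{v} C] [Abelian C] [Linear R C]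
  {α : Type*} [AddRightCancelSemigroup α] [One α]

variable (R) in
def linearYonedaFunctor (K : ChainComplex C α) : C ⥤ CochainComplex (ModuleCat.{v} R) α where
  obj Y := K.linearYonedaObj R Y
  map f :=
    { f := fun n => ((linearCoyoneda R C).obj (op (K.X n))).map f
      comm' := fun _ _ _ => by ext g; exact (Category.assoc _ g f).symm }
  map_id _ := by ext; exact Category.comp_id _
  map_comp _ _ := by ext; exact (Category.assoc _ _ _).symm

instance (K : ChainComplex C α) : (K.linearYonedaFunctor R).Additive where
  map_add := by intros; ext; exact Preadditive.comp_add _ _ _ _ _ _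

end ChainComplex

namespace CategoryTheory.ShortComplex.ShortExact

variable {R : Type*} [Ring R] {C : Type*} [Category.{v} C] [Abelian C] [Linear R C]
  {S : ShortComplex C}

theorem map_linearCoyoneda (hS : S.ShortExact) (P : C) [Projective P] :
    (S.map ((linearCoyoneda R C).obj (Opposite.op P))).ShortExact := by
  have := hS.mono_f
  have := hS.epi_g
  refine ShortExact.mk ?_ (mono_f := ?_) (epi_g := ?_)
  · rw [moduleCat_exact_iff]
    intro g hg
    exact ⟨hS.exact.lift g hg, hS.exact.lift_f g hg⟩
  · rw [ModuleCat.mono_iff_injective]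
    intro g g' h
    exact (cancel_mono S.f).1 h
  · rw [ModuleCat.epi_iff_surjective]
    intro g
    exact ⟨Projective.factorThru g S.g, Projective.factorThru_comp g S.g⟩

theorem map_linearYonedaFunctor (hS : S.ShortExact) {α : Type*} [AddRightCancelSemigroup α]
    [One α] (K : ChainComplex C α) [∀ n, Projective (K.X n)] :
    (S.map (K.linearYonedaFunctor R)).ShortExact :=
  HomologicalComplex.shortExact_of_degreewise_shortExact _ fun n =>
    hS.map_linearCoyoneda (K.X n)

variable [EnoughProjectives C]

/-- The connecting map of the long exact sequence of `Ext(A, -)`. -/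
noncomputable def extIsoExtSucc (hS : S.ShortExact) (A : C) (n : ℕ)
    (h : IsZero (((Ext R C n).obj (Opposite.op A)).obj S.X₂))
    (h' : IsZero (((Ext R C (n + 1)).obj (Opposite.op A)).obj S.X₂)) :
    ((Ext R C n).obj (Opposite.op A)).obj S.X₃ ≅ ((Ext R C (n + 1)).obj (Opposite.op A)).obj S.X₁ :=
  let P := projectiveResolution A
  P.isoExt n S.X₃ ≪≫
    (hS.map_linearYonedaFunctor (R := R) P.complex).δIso n (n + 1) rfl
      (h.of_iso (P.isoExt n S.X₂).symm) (h'.of_iso (P.isoExt (n + 1) S.X₂).symm) ≪≫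
    (P.isoExt (n + 1) S.X₁).symm

end CategoryTheory.ShortComplex.ShortExact

/-- `Hom(-, Y)` turns colimits into limits, so it is its own zeroth derived functor. -/
noncomputable def extZeroIso {R : Type*} [Ring R] {C : Type*} [Category.{v} C] [Abelian C]
    [Linear R C] [EnoughProjectives C] (A Y : C) :
    ((Ext R C 0).obj (op A)).obj Y ≅ ModuleCat.of R (A ⟶ Y) :=
  have := preservesColimits_rightOp ((linearYoneda R C).obj Y)
  (((linearYoneda R C).obj Y).rightOp.leftDerivedZeroIsoSelf.app A).unop.symm

namespace Submodule

variable {R : Type*} [CommRing R] {X : Type*} [AddCommGroup X] [Module R X]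

def quotientIdealHomEquivTorsionBySet (I : Ideal R) :
    (R ⧸ I →ₗ[R] X) ≃ₗ[R] torsionBySet R X I where
  toFun f := ⟨f (I.mkQ 1), by
    rw [mem_torsionBySet_iff]
    rintro ⟨a, ha⟩
    rw [← map_smul, ← map_smul, smul_eq_mul, mul_one, mkQ_apply, (Quotient.mk_eq_zero I).2 ha,
      map_zero]⟩
  invFun x := I.liftQ (LinearMap.toSpanSingleton R X x) fun a ha => by
    simpa using (mem_torsionBySet_iff _ _).1 x.2 ⟨a, ha⟩
  map_add' _ _ := rfl
  map_smul' _ _ := rfl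
  left_inv f := by
    apply linearMap_qext
    ext
    simp
  right_inv x := by
    ext
    exact one_smul R (x : X)

variable (M : Submodule R X) (I : Ideal R)

theorem mem_colonSub_iff_mkQ_mem_torsionBySet {u : X} :
    u ∈ colonSub M I ↔ M.mkQ u ∈ torsionBySet R (X ⧸ M) I := by
  simp only [mem_torsionBySet_iff, mkQ_apply, ← Quotient.mk_smul, Quotient.mk_eq_zero,
    Subtype.forall]
  rfl

noncomputable def colonSubQuotientEquivTorsionBySet :
    (colonSub M I ⧸ comap (colonSub M I).subtype M) ≃ₗ[R] torsionBySet R (X ⧸ M) I :=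
  let f : colonSub M I →ₗ[R] torsionBySet R (X ⧸ M) I :=
    M.mkQ.restrict fun _ ↦ (mem_colonSub_iff_mkQ_mem_torsionBySet M I).1
  have hf : Function.Surjective f := by
    rintro ⟨y, hy⟩
    obtain ⟨u, rfl⟩ := M.mkQ_surjective y
    exact ⟨⟨u, (mem_colonSub_iff_mkQ_mem_torsionBySet M I).2 hy⟩, rfl⟩
  have hker : LinearMap.ker f = comap (colonSub M I).subtype M := by
    ext u
    simp [f, LinearMap.restrict_apply]
  (quotEquivOfEq _ _ hker.symm).trans (f.quotKerEquivOfSurjective hf)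

end Submodule

theorem ext_iso_colon_quotient_general {R : Type u} [CommRing R]
    (I : Ideal R) (X : Type u) [AddCommGroup X] [Module R X] (M : Submodule R X)
    (hHom : ∀ f : (R ⧸ I) →ₗ[R] X, f = 0)
    (hExt : Subsingleton (((Ext R (ModuleCat.{u} R) 1).obj
        (Opposite.op (ModuleCat.of R (R ⧸ I)))).obj (ModuleCat.of R X))) :
    Nonempty
      ((((Ext R (ModuleCat.{u} R) 1).obj
          (Opposite.op (ModuleCat.of R (R ⧸ I)))).obj (ModuleCat.of R ↥M)) ≃ₗ[R]
        (↥(colonSub M I) ⧸ Submodule.comap (colonSub M I).subtype M)) := by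
  let A := ModuleCat.of R (R ⧸ I)
  let S := ModuleCat.shortComplexOfCompEqZero M.subtype M.mkQ
    (LinearMap.exact_subtype_mkQ M).linearMap_comp_eq_zero
  have hS : S.ShortExact := ModuleCat.shortComplex_shortExact S (LinearMap.exact_subtype_mkQ M)
    M.injective_subtype M.mkQ_surjective
  have : Subsingleton (A ⟶ S.X₂) := ⟨fun f g ↦ ModuleCat.hom_ext ((hHom _).trans (hHom _).symm)⟩
  have hExt₀ := (ModuleCat.isZero_of_subsingleton _).of_iso (extZeroIso (R := R) A S.X₂)
  have hExt₁ := ModuleCat.isZero_of_subsingleton (((Ext R _ 1).obj (op A)).obj S.X₂)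
  exact ⟨((hS.extIsoExtSucc A 0 hExt₀ hExt₁).symm ≪≫ extZeroIso A S.X₃).toLinearEquiv ≪≫ₗ
    ModuleCat.homLinearEquiv ≪≫ₗ Submodule.quotientIdealHomEquivTorsionBySet I ≪≫ₗ
    (Submodule.colonSubQuotientEquivTorsionBySet M I).symm⟩

/-- Bemerkung 1.10: Let `M ⊆ X` be an extension of `R`-modules with `Hom_R(R/I, X) = 0` and
`Ext¹_R(R/I, X) = 0`. Then `Ext¹_R(R/I, M) ≅ (M :_X I)/M` as `R`-modules. -/
theorem ext_iso_colon_quotient {R : Type u} [CommRing R] [IsNoetherianRing R] [IsLocalRing R]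
    (I : Ideal R) (X : Type u) [AddCommGroup X] [Module R X] (M : Submodule R X)
    (hHom : ∀ f : (R ⧸ I) →ₗ[R] X, f = 0)
    (hExt : Subsingleton (((Ext R (ModuleCat.{u} R) 1).obj
        (Opposite.op (ModuleCat.of R (R ⧸ I)))).obj (ModuleCat.of R X))) :
    Nonempty
      ((((Ext R (ModuleCat.{u} R) 1).obj
          (Opposite.op (ModuleCat.of R (R ⧸ I)))).obj (ModuleCat.of R ↥M)) ≃ₗ[R]
        (↥(colonSub M I) ⧸ Submodule.comap (colonSub M I).subtype M)) :=
  ext_iso_colon_quotient_general I X M hHom hExt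
end

section
/- Let (R, m) be a commutative noetherian local ring and M an excellent R-module, i.e. I•M = γ_I(M) for every ideal I of R. Then: (a) for every ideal a of R the descending chain M ⊇ a•M ⊇ a^2•M ⊇ ... is eventually stationary, i.e. there exists n ≥ 1 with a^n•M = a^{n+1}•M; (b) for every r ∈ R there exists e ≥ 1 such that { x ∈ M : r^e•x = 0 } + r•M = M. -/
/-!
If `Ann(s) ⊆ Ann(x)`, then `t s ↦ t x` is a well-defined map `(s) → M` hitting `x`, so
excellence gives `x ∈ sM`. Since `R` is noetherian, `Ann(rⁿ)` is stationary from some `e` on;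
hence `Ann(r^{e+k}) ⊆ Ann(rᵉ)`, which gives `rᵉM ⊆ r^{e+k}M`. With `k = 1` this stabilises the
chain for principal ideals, and `(b ⊔ c)^{m+n} ≤ bᵐ ⊔ cⁿ` propagates stability to finitely
generated ideals. With `k = e`, write `rᵉx = r^{2e}y`; then `x = (x - rᵉy) + rᵉy` with
`rᵉ(x - rᵉy) = 0`.
-/

open Submodule
open Ideal (torsionOf mem_torsionOf_iff)

section

variable {R : Type*} [CommRing R] {M : Type*} [AddCommGroup M] [Module R M]

theorem Submodule.pow_smul_eq_of_pow_smul_eq_pow_succ_smul {a : Ideal R} {N : Submodule R M}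
    {n : ℕ} (h : a ^ n • N = a ^ (n + 1) • N) {k : ℕ} (hk : n ≤ k) :
    a ^ k • N = a ^ n • N := by
  induction k, hk using Nat.le_induction with
  | base => rfl
  | succ k _ ih => rw [pow_succ', mul_smul, ih, ← mul_smul, ← pow_succ', h]

theorem Submodule.sup_pow_smul_eq_pow_succ_smul {b c : Ideal R} {N : Submodule R M} {m n : ℕ}
    (hb : b ^ m • N = b ^ (m + 1) • N) (hc : c ^ n • N = c ^ (n + 1) • N) :
    (b ⊔ c) ^ (m + n) • N = (b ⊔ c) ^ (m + n + 1) • N := by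
  refine le_antisymm ?_ (smul_mono_left (Ideal.pow_le_pow_right (Nat.le_succ _)))
  calc (b ⊔ c) ^ (m + n) • N
      ≤ (b ^ m ⊔ c ^ n) • N := smul_mono_left Ideal.sup_pow_add_le_pow_sup_pow
    _ = b ^ (m + n + 1) • N ⊔ c ^ (m + n + 1) • N := by
      rw [sup_smul, pow_smul_eq_of_pow_smul_eq_pow_succ_smul hb (by omega : m ≤ m + n + 1),
        pow_smul_eq_of_pow_smul_eq_pow_succ_smul hc (by omega : n ≤ m + n + 1)]
    _ ≤ (b ⊔ c) ^ (m + n + 1) • N :=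
      sup_le (smul_mono_left (Ideal.pow_right_mono le_sup_left _))
        (smul_mono_left (Ideal.pow_right_mono le_sup_right _))

theorem Ideal.torsionOf_le_torsionOf_smul (a : R) (x : M) :
    torsionOf R M x ≤ torsionOf R M (a • x) := fun t ht => by
  rw [mem_torsionOf_iff] at ht ⊢
  rw [smul_comm, ht, smul_zero]

theorem exists_torsionOf_pow_eq [IsNoetherianRing R] (r : R) :
    ∃ e, ∀ m ≥ e, torsionOf R R (r ^ m) = torsionOf R R (r ^ e) := by
  have mono : Monotone fun n => torsionOf R R (r ^ n) := monotone_nat_of_le_succ fun n => by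
    simpa only [pow_succ', smul_eq_mul] using Ideal.torsionOf_le_torsionOf_smul r (r ^ n)
  obtain ⟨e, he⟩ := monotone_stabilizes_iff_noetherian.mpr inferInstance ⟨_, mono⟩
  exact ⟨e, fun m hm => (he m hm).symm⟩

theorem mem_span_singleton_smul_top_of_torsionOf_le {s : R} {x : M}
    (hs : ⨆ f : Ideal.span {s} →ₗ[R] M, LinearMap.range f ≤ Ideal.span {s} • ⊤)
    (hx : torsionOf R R s ≤ torsionOf R M x) :
    x ∈ Ideal.span {s} • (⊤ : Submodule R M) := by
  let f : Ideal.span {s} →ₗ[R] M :=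
    (torsionOf R R s).liftQ (LinearMap.toSpanSingleton R M x) hx ∘ₗ
      (Ideal.quotTorsionOfEquivSpanSingleton R R s).symm.toLinearMap
  have hf : f ⟨s, Ideal.mem_span_singleton_self s⟩ = x := by
    have : (Ideal.quotTorsionOfEquivSpanSingleton R R s).symm
        ⟨s, Ideal.mem_span_singleton_self s⟩ = Submodule.Quotient.mk 1 := by
      rw [LinearEquiv.symm_apply_eq, Ideal.quotTorsionOfEquivSpanSingleton_apply_mk, one_smul]
    rw [LinearMap.comp_apply, LinearEquiv.coe_coe, this]
    exact one_smul R x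
  exact hs (mem_iSup_of_mem f ⟨_, hf⟩)

theorem span_singleton_smul_top_le_of_torsionOf_le {s s' : R}
    (hs : ⨆ f : Ideal.span {s} →ₗ[R] M, LinearMap.range f ≤ Ideal.span {s} • ⊤)
    (h : torsionOf R R s ≤ torsionOf R R s') :
    Ideal.span {s'} • (⊤ : Submodule R M) ≤ Ideal.span {s} • ⊤ := by
  refine smul_le.mpr fun t ht m _ => ?_
  obtain ⟨u, rfl⟩ := Ideal.mem_span_singleton'.mp ht
  rw [mul_smul]
  refine smul_mem _ u (mem_span_singleton_smul_top_of_torsionOf_le hs fun a ha => ?_)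
  have : a * s' = 0 := h ha
  rw [mem_torsionOf_iff, smul_smul, this, zero_smul]

theorem exists_span_singleton_pow_smul_top_eq [IsNoetherianRing R]
    (hM : ∀ s : R, ⨆ f : Ideal.span {s} →ₗ[R] M, LinearMap.range f ≤ Ideal.span {s} • ⊤)
    (r : R) : ∃ n, Ideal.span {r} ^ n • (⊤ : Submodule R M) = Ideal.span {r} ^ (n + 1) • ⊤ := by
  obtain ⟨e, he⟩ := exists_torsionOf_pow_eq r
  refine ⟨e, le_antisymm ?_ (smul_mono_left (Ideal.pow_le_pow_right (Nat.le_succ e)))⟩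
  rw [Ideal.span_singleton_pow, Ideal.span_singleton_pow]
  exact span_singleton_smul_top_le_of_torsionOf_le (hM _) (he _ (Nat.le_succ e)).le

theorem exists_pow_smul_top_eq_pow_succ_smul_top [IsNoetherianRing R]
    (hM : ∀ s : R, ⨆ f : Ideal.span {s} →ₗ[R] M, LinearMap.range f ≤ Ideal.span {s} • ⊤)
    (a : Ideal R) : ∃ n, a ^ n • (⊤ : Submodule R M) = a ^ (n + 1) • ⊤ := by
  induction a, IsNoetherian.noetherian a using fg_induction with
  | singleton r => exact exists_span_singleton_pow_smul_top_eq hM r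
  | sup b c _ _ hb hc =>
    obtain ⟨m, hm⟩ := hb
    obtain ⟨n, hn⟩ := hc
    exact ⟨m + n, sup_pow_smul_eq_pow_succ_smul hm hn⟩

theorem torsionBy_pow_sup_range_lsmul_eq_top {r : R} {e : ℕ} (he : 1 ≤ e)
    (h : Ideal.span {r ^ e} • (⊤ : Submodule R M) ≤ Ideal.span {r ^ (e + e)} • ⊤) :
    torsionBy R M (r ^ e) ⊔ LinearMap.range (LinearMap.lsmul R M r) = ⊤ := by
  refine eq_top_iff.mpr fun x _ => ?_
  have hx : r ^ e • x ∈ Ideal.span {r ^ (e + e)} • (⊤ : Submodule R M) :=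
    h (smul_mem_smul (Ideal.mem_span_singleton_self _) mem_top)
  obtain ⟨y, -, hy⟩ := (mem_smul_pointwise_iff_exists _ _ _).mp
    ((ideal_span_singleton_smul _ _).le hx)
  refine mem_sup.mpr ⟨x - r ^ e • y, ?_, r ^ e • y, ⟨r ^ (e - 1) • y, ?_⟩, sub_add_cancel x _⟩
  · rw [mem_torsionBy_iff, smul_sub, smul_smul, ← pow_add, hy, sub_self]
  · rw [LinearMap.lsmul_apply, smul_smul, ← pow_succ', Nat.sub_add_cancel he]

end

theorem excellent_chain_and_decomposition_general
    {R : Type u} [CommRing R] [IsNoetherianRing R]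
    (M : Type v) [AddCommGroup M] [Module R M]
    (hM : ∀ I : Ideal R, I • (⊤ : Submodule R M) = ⨆ f : I →ₗ[R] M, LinearMap.range f) :
    (∀ a : Ideal R, ∃ n : ℕ, 1 ≤ n ∧
      a ^ n • (⊤ : Submodule R M) = a ^ (n + 1) • (⊤ : Submodule R M)) ∧
    (∀ r : R, ∃ e : ℕ, 1 ≤ e ∧
      Submodule.torsionBy R M (r ^ e) ⊔
        LinearMap.range (LinearMap.lsmul R M r) = (⊤ : Submodule R M)) := by
  have hM' (s : R) := (hM (Ideal.span {s})).ge
  refine ⟨fun a => ?_, fun r => ?_⟩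
  · obtain ⟨n, hn⟩ := exists_pow_smul_top_eq_pow_succ_smul_top hM' a
    exact ⟨n + 1, Nat.le_add_left 1 n,
      (pow_smul_eq_of_pow_smul_eq_pow_succ_smul hn (Nat.le_succ n)).trans
        (pow_smul_eq_of_pow_smul_eq_pow_succ_smul hn (by omega)).symm⟩
  · obtain ⟨e, he⟩ := exists_torsionOf_pow_eq r
    refine ⟨e + 1, Nat.le_add_left 1 e, torsionBy_pow_sup_range_lsmul_eq_top (Nat.le_add_left 1 e)
      (span_singleton_smul_top_le_of_torsionOf_le (hM' _)
        ((he _ (by omega)).trans (he _ (by omega)).symm).le)⟩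

/-- Satz 1.11 (a), (b): Let `M` be an excellent `R`-module, i.e. `I•M = γ_I(M)` for every
ideal `I`. Then (a) for every ideal `a` the descending chain `M ⊇ aM ⊇ a²M ⊇ ⋯` is
stationary; (b) for every `r ∈ R` there is `e ≥ 1` with `M[r^e] + rM = M`. -/
theorem excellent_chain_and_decomposition
    {R : Type u} [CommRing R] [IsNoetherianRing R] [IsLocalRing R]
    (M : Type v) [AddCommGroup M] [Module R M]
    (hM : ∀ I : Ideal R, I • (⊤ : Submodule R M) = ⨆ f : I →ₗ[R] M, LinearMap.range f) :
    (∀ a : Ideal R, ∃ n : ℕ, 1 ≤ n ∧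
      a ^ n • (⊤ : Submodule R M) = a ^ (n + 1) • (⊤ : Submodule R M)) ∧
    (∀ r : R, ∃ e : ℕ, 1 ≤ e ∧
      Submodule.torsionBy R M (r ^ e) ⊔
        LinearMap.range (LinearMap.lsmul R M r) = (⊤ : Submodule R M)) :=
  excellent_chain_and_decomposition_general M hM
end

section
/- Let (R, m) be a commutative noetherian local ring and M an excellent R-module, i.e. I•M = γ_I(M) for every ideal I of R. Then: (c) if the socle So(M) = { x ∈ M : m•x = 0 } is nonzero, then M is faithful, i.e. Ann_R(M) = 0; (d) if So(R) = { r ∈ R : m•r = 0 } is nonzero, then So(R)•M = So(M). -/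
open IsLocalRing

lemma exists_span_map
    {R : Type u} [CommRing R] [IsLocalRing R]
    {M : Type v} [AddCommGroup M] [Module R M]
    (s : R) (hs : s ≠ 0) (x : M) (hx : ∀ r ∈ maximalIdeal R, r • x = 0) :
    ∃ f : (Ideal.span {s} : Ideal R) →ₗ[R] M,
      f ⟨s, Ideal.mem_span_singleton_self s⟩ = x := by
  set sE : (Ideal.span {s} : Ideal R) := ⟨s, Ideal.mem_span_singleton_self s⟩ with hsE
  set π : R →ₗ[R] (Ideal.span {s} : Ideal R) := LinearMap.toSpanSingleton R _ sE with hπ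
  have hsurj : Function.Surjective π := by
    rintro ⟨y, hy⟩
    obtain ⟨c, rfl⟩ := Ideal.mem_span_singleton.mp hy
    exact ⟨c, Subtype.ext (by simp [hπ, hsE, LinearMap.toSpanSingleton_apply,
      Submodule.coe_smul, smul_eq_mul, mul_comm])⟩
  have hker : LinearMap.ker π ≤ LinearMap.ker (LinearMap.toSpanSingleton R M x) := by
    intro r hr
    have hrs : r * s = 0 := by
      have := Subtype.ext_iff.mp (LinearMap.mem_ker.mp hr)
      simpa [hπ, hsE, smul_eq_mul] using this
    have hrm : r ∈ maximalIdeal R := by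
      rw [mem_maximalIdeal]
      intro hu
      apply hs
      obtain ⟨u, rfl⟩ := hu
      calc s = ↑u⁻¹ * (↑u * s) := by simp
        _ = 0 := by rw [hrs, mul_zero]
    simpa [LinearMap.toSpanSingleton_apply] using hx r hrm
  let e := LinearMap.quotKerEquivOfSurjective π hsurj
  refine ⟨(Submodule.liftQ _ (LinearMap.toSpanSingleton R M x) hker).comp
    (e.symm : _ →ₗ[R] _), ?_⟩
  have h1 : e (Submodule.Quotient.mk 1) = sE := by
    show π 1 = sE
    simp [hπ]
  have h2 : e.symm sE = Submodule.Quotient.mk 1 := by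
    rw [← h1, LinearEquiv.symm_apply_apply]
  rw [LinearMap.comp_apply]
  show (Submodule.liftQ _ _ hker) (e.symm sE) = x
  rw [h2, Submodule.liftQ_apply, LinearMap.toSpanSingleton_apply, one_smul]

/-- Satz 1.11 (c), (d): Let `M` be an excellent `R`-module, i.e. `I•M = γ_I(M)` for every
ideal `I`. Then (c) if the socle `So(M) = M[m]` is nonzero, `M` is faithful;
(d) if `So(R) ≠ 0` then `So(R)•M = So(M)`. -/
theorem excellent_socle
    {R : Type u} [CommRing R] [IsNoetherianRing R] [IsLocalRing R]
    (M : Type v) [AddCommGroup M] [Module R M]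
    (hM : ∀ I : Ideal R, I • (⊤ : Submodule R M) = ⨆ f : I →ₗ[R] M, LinearMap.range f) :
    (Submodule.torsionBySet R M ((IsLocalRing.maximalIdeal R : Ideal R) : Set R) ≠ ⊥ →
      Module.annihilator R M = ⊥) ∧
    ((Submodule.torsionBySet R R ((IsLocalRing.maximalIdeal R : Ideal R) : Set R) : Ideal R) ≠ ⊥ →
      (Submodule.torsionBySet R R ((IsLocalRing.maximalIdeal R : Ideal R) : Set R) : Ideal R) •
          (⊤ : Submodule R M) =
        Submodule.torsionBySet R M ((IsLocalRing.maximalIdeal R : Ideal R) : Set R)) := by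
  -- a general step: if `x` is in the socle of `M` and `s ≠ 0`, then `x ∈ span{s} • ⊤`.
  have key : ∀ (s : R), s ≠ 0 → ∀ x : M,
      x ∈ Submodule.torsionBySet R M ((maximalIdeal R : Ideal R) : Set R) →
      x ∈ (Ideal.span {s} : Ideal R) • (⊤ : Submodule R M) := by
    intro s hs x hx
    have hx' : ∀ r ∈ maximalIdeal R, r • x = 0 := fun r hr =>
      (Submodule.mem_torsionBySet_iff _ x).mp hx ⟨r, hr⟩
    obtain ⟨f, hf⟩ := exists_span_map s hs x hx'
    rw [hM (Ideal.span {s})]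
    exact le_iSup (fun f : (Ideal.span {s} : Ideal R) →ₗ[R] M => LinearMap.range f) f
      ⟨⟨s, Ideal.mem_span_singleton_self s⟩, hf⟩
  constructor
  · -- (c)
    intro hSo
    obtain ⟨x, hx, hx0⟩ := Submodule.ne_bot_iff _ |>.mp hSo
    rw [eq_bot_iff]
    intro a ha
    rw [Ideal.mem_bot]
    by_contra ha0
    have hxmem := key a ha0 x hx
    have hbot : (Ideal.span {a} : Ideal R) • (⊤ : Submodule R M) = ⊥ := by
      rw [eq_bot_iff]
      refine Submodule.smul_le.mpr ?_
      intro r hr y _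
      obtain ⟨c, rfl⟩ := Ideal.mem_span_singleton.mp hr
      rw [Submodule.mem_bot, mul_comm, mul_smul,
        Module.mem_annihilator.mp ha y, smul_zero]
    rw [hbot, Submodule.mem_bot] at hxmem
    exact hx0 hxmem
  · -- (d)
    intro hS
    apply le_antisymm
    · refine Submodule.smul_le.mpr ?_
      intro s hs y _
      rw [Submodule.mem_torsionBySet_iff]
      rintro ⟨r, hr⟩
      have : r • s = 0 := (Submodule.mem_torsionBySet_iff _ s).mp hs ⟨r, hr⟩
      rw [← mul_smul, ← smul_eq_mul, this, zero_smul]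
    · intro x hx
      obtain ⟨s, hs, hs0⟩ := Submodule.ne_bot_iff _ |>.mp hS
      refine Submodule.smul_mono_left ?_ (key s hs0 x hx)
      exact Ideal.span_le.mpr (Set.singleton_subset_iff.mpr hs)
end

section
/- Let (R, m) be a commutative noetherian local ring and M a reduced excellent R-module, i.e. I•M = γ_I(M) for every ideal I of R and the only submodule U of M with m•U = U is U = 0. If M ≠ 0, then M is faithful (Ann_R(M) = 0) and R is artinian. -/
section Aux

variable {R : Type u} [CommRing R] {M : Type v} [AddCommGroup M] [Module R M]

/-- A finitely generated module killed by a maximal ideal is Artinian. -/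
lemma aux_artinian_of_killed (m : Ideal R) (hm : m.IsMaximal) [Module.Finite R M]
    (h : ∀ a ∈ m, ∀ x : M, a • x = 0) : IsArtinian R M := by
  have htor : Module.IsTorsionBySet R M (m : Set R) := fun x a => h a.1 a.2 x
  letI : Module (R ⧸ m) M := htor.module
  letI : Field (R ⧸ m) := Ideal.Quotient.field m
  haveI : IsScalarTower R (R ⧸ m) M := htor.isScalarTower
  haveI : Module.Finite (R ⧸ m) M := Module.Finite.of_restrictScalars_finite R (R ⧸ m) M
  haveI art : IsArtinian (R ⧸ m) M := isArtinian_of_fg_of_artinian'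
  let e : Submodule R M ↪o Submodule (R ⧸ m) M :=
    { toFun := fun p =>
        { carrier := p
          add_mem' := fun h1 h2 => p.add_mem h1 h2
          zero_mem' := p.zero_mem
          smul_mem' := fun c x hx => Quotient.inductionOn' c fun b => p.smul_mem b hx }
      inj' := fun p q hpq => by
        ext x
        exact SetLike.ext_iff.mp hpq x
      map_rel_iff' := Iff.rfl }
  exact ⟨e.ltEmbedding.wellFounded art.wf⟩

/-- A Noetherian local ring with nilpotent maximal ideal is Artinian. -/
lemma aux_artinian [IsNoetherianRing R] [IsLocalRing R] {n : ℕ}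
    (hn : (IsLocalRing.maximalIdeal R) ^ n = ⊥) : IsArtinianRing R := by
  set m := IsLocalRing.maximalIdeal R
  have key : ∀ k : ℕ, IsArtinian R (R ⧸ (m ^ k : Ideal R)) := by
    intro k
    induction k with
    | zero =>
      haveI : Subsingleton (R ⧸ (m ^ 0 : Ideal R)) := by
        rw [pow_zero, Ideal.one_eq_top]
        exact Submodule.Quotient.subsingleton_iff.mpr rfl
      infer_instance
    | succ k ih =>
      haveI := ih
      have hle : (m ^ (k + 1) : Ideal R) ≤ m ^ k := Ideal.pow_le_pow_right (Nat.le_succ k)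
      set J : Ideal R := m ^ (k + 1)
      set Jk : Ideal R := m ^ k
      let g : (R ⧸ J) →ₗ[R] R ⧸ Jk :=
        Submodule.mapQ J Jk LinearMap.id (by simpa using hle)
      set K : Submodule R (R ⧸ J) := LinearMap.ker g with hKdef
      have hK : K = Submodule.map J.mkQ Jk := by
        ext x
        obtain ⟨r, rfl⟩ := J.mkQ_surjective x
        simp only [hKdef, LinearMap.mem_ker, Submodule.mem_map]
        constructor
        · intro hx
          refine ⟨r, ?_, rfl⟩
          have hgr : g (J.mkQ r) = Submodule.Quotient.mk r := rfl
          rw [hgr] at hx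
          exact (Submodule.Quotient.mk_eq_zero _).mp hx
        · rintro ⟨s, hs, hsr⟩
          have h1 : g (J.mkQ s) = Submodule.Quotient.mk s := rfl
          rw [← hsr, h1]
          exact (Submodule.Quotient.mk_eq_zero _).mpr hs
      haveI : Module.Finite R K := by
        rw [Module.Finite.iff_fg, hK]
        exact (IsNoetherian.noetherian Jk).map _
      haveI : IsArtinian R K := by
        apply aux_artinian_of_killed m (IsLocalRing.maximalIdeal.isMaximal R)
        rintro a ha ⟨x, hx⟩
        rw [hK] at hx
        obtain ⟨s, hs, rfl⟩ := hx
        apply Subtype.ext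
        show a • (J.mkQ s) = 0
        rw [← map_smul]
        apply (Submodule.Quotient.mk_eq_zero _).mpr
        show a • s ∈ J
        rw [smul_eq_mul]
        have : a * s ∈ m * m ^ k := Ideal.mul_mem_mul ha hs
        rwa [← pow_succ'] at this
      exact isArtinian_of_range_eq_ker K.subtype g (Submodule.range_subtype K)
  have := key n
  rw [hn] at this
  exact isArtinian_of_linearEquiv (Submodule.quotEquivOfEqBot (⊥ : Ideal R) rfl)

/-- The key consequence of excellence for principal ideals. -/
lemma aux_mem_span_smul
    (hM : ∀ I : Ideal R, I • (⊤ : Submodule R M) = ⨆ f : I →ₗ[R] M, LinearMap.range f)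
    (r : R) (x : M) (hx : ∀ a : R, a * r = 0 → a • x = 0) :
    x ∈ Ideal.span {r} • (⊤ : Submodule R M) := by
  have key : ∀ y : Ideal.span {r}, ∃ a : R, a * r = (y : R) := by
    intro y
    exact Ideal.mem_span_singleton'.mp y.2
  choose c hc using key
  have hwd : ∀ (a : R) (y : Ideal.span {r}), a * r = (y : R) → a • x = c y • x := by
    intro a y h
    have h0 : (a - c y) * r = 0 := by rw [sub_mul, h, hc, sub_self]
    have := hx _ h0
    rwa [sub_smul, sub_eq_zero] at this
  let f : (Ideal.span {r} : Ideal R) →ₗ[R] M :=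
    { toFun := fun y => c y • x
      map_add' := by
        intro y z
        show c (y + z) • x = c y • x + c z • x
        rw [← (hwd (c y + c z) (y + z) (by rw [add_mul, hc, hc]; rfl))]
        rw [add_smul]
      map_smul' := by
        intro a y
        show c (a • y) • x = a • (c y • x)
        rw [← (hwd (a * c y) (a • y) (by rw [mul_assoc, hc]; rfl))]
        rw [mul_smul] }
  have hfr : f ⟨r, Ideal.subset_span rfl⟩ = x := by
    have : c ⟨r, Ideal.subset_span rfl⟩ • x = (1 : R) • x :=
      (hwd 1 ⟨r, Ideal.subset_span rfl⟩ (one_mul r)).symm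
    simpa [f, this] using (one_smul R x)
  rw [hM (Ideal.span {r})]
  exact le_iSup (fun f : (Ideal.span {r} : Ideal R) →ₗ[R] M => LinearMap.range f) f
    ⟨⟨r, Ideal.subset_span rfl⟩, hfr⟩

end Aux

/-- Folgerung 1.13 (g): Let `M` be a reduced excellent `R`-module, i.e. `I•M = γ_I(M)` for
every ideal `I`, and the only submodule `U ⊆ M` with `m•U = U` is `U = 0`. If `M ≠ 0`,
then `M` is faithful and `R` is artinian. -/
theorem reduced_excellent_faithful_artinian
    {R : Type u} [CommRing R] [IsNoetherianRing R] [IsLocalRing R]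
    (M : Type v) [AddCommGroup M] [Module R M]
    (hM : ∀ I : Ideal R, I • (⊤ : Submodule R M) = ⨆ f : I →ₗ[R] M, LinearMap.range f)
    (hred : ∀ U : Submodule R M, IsLocalRing.maximalIdeal R • U = U → U = ⊥)
    (hne : Nontrivial M) :
    Module.annihilator R M = ⊥ ∧ IsArtinianRing R := by
  set m := IsLocalRing.maximalIdeal R with hm
  set a := Module.annihilator R M with ha
  -- Step B : every element of m is nilpotent on M
  have stepB : ∀ r ∈ m, ∃ n : ℕ, r ^ n ∈ a := by
    intro r hr
    -- stabilization of annihilator chain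
    let f : ℕ →o Ideal R :=
      ⟨fun n => Ideal.torsionOf R R (r ^ n), by
        intro i j hij b hb
        rw [Ideal.mem_torsionOf_iff, smul_eq_mul] at hb ⊢
        obtain ⟨k, rfl⟩ := Nat.exists_eq_add_of_le hij
        rw [pow_add, ← mul_assoc, hb, zero_mul]⟩
    obtain ⟨n, hn⟩ := (monotone_stabilizes_iff_noetherian.mpr inferInstance) f
    have hstab : Ideal.torsionOf R R (r ^ (n + 1)) ≤ Ideal.torsionOf R R (r ^ n) :=
      le_of_eq (hn (n + 1) (Nat.le_succ n)).symm
    set U : Submodule R M := Ideal.span {r ^ n} • ⊤ with hU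
    have hU1 : U ≤ Ideal.span {r ^ (n + 1)} • (⊤ : Submodule R M) := by
      intro x hx
      apply aux_mem_span_smul hM
      intro b hb
      have hbn : b * r ^ n = 0 := by
        have : b ∈ Ideal.torsionOf R R (r ^ (n + 1)) := by
          rw [Ideal.mem_torsionOf_iff, smul_eq_mul]; exact hb
        have := hstab this
        rwa [Ideal.mem_torsionOf_iff, smul_eq_mul] at this
      refine Submodule.smul_induction_on hx ?_ ?_
      · intro s hs y _
        obtain ⟨cc, rfl⟩ := Ideal.mem_span_singleton'.mp hs
        rw [smul_smul, ← mul_assoc, mul_comm b cc, mul_assoc, hbn, mul_zero, zero_smul]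
      · intro y z hy hz
        rw [smul_add, hy, hz, add_zero]
    have hU2 : Ideal.span {r ^ (n + 1)} • (⊤ : Submodule R M) ≤ m • U := by
      apply Submodule.smul_le.mpr
      intro t ht y hy
      obtain ⟨cc, rfl⟩ := Ideal.mem_span_singleton'.mp ht
      have heq : (cc * r ^ (n + 1)) • y = r • ((cc * r ^ n) • y) := by
        rw [smul_smul, ← mul_assoc, mul_comm r cc, mul_assoc, pow_succ']
      rw [heq]
      exact Submodule.smul_mem_smul hr
        (Submodule.smul_mem_smul (Ideal.mem_span_singleton'.mpr ⟨cc, rfl⟩) hy)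
    have hU3 : m • U ≤ U := Submodule.smul_le_right
    have hUbot : U = ⊥ := hred U (le_antisymm hU3 (hU1.trans hU2))
    refine ⟨n, Module.mem_annihilator.mpr fun x => ?_⟩
    have hmem : r ^ n • x ∈ U :=
      Submodule.smul_mem_smul (Ideal.subset_span rfl) trivial
    rw [hUbot] at hmem
    exact (Submodule.mem_bot R).mp hmem
  -- Step D : some power of m annihilates M
  have stepD : ∃ N : ℕ, m ^ N ≤ a := by
    apply Ideal.exists_pow_le_of_le_radical_of_fg
    · intro r hr
      obtain ⟨n, hn⟩ := stepB r hr
      exact ⟨n, hn⟩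
    · exact IsNoetherian.noetherian m
  obtain ⟨N, hN⟩ := stepD
  -- Step E : the annihilator is trivial
  have stepE : a = ⊥ := by
    by_contra hbot
    obtain ⟨s, hs, hs0⟩ := Submodule.exists_mem_ne_zero_of_ne_bot hbot
    -- socle is zero
    have socle0 : ∀ x : M, (∀ b ∈ m, b • x = 0) → x = 0 := by
      intro x hx
      have hmem : x ∈ Ideal.span {s} • (⊤ : Submodule R M) := by
        apply aux_mem_span_smul hM
        intro b hb
        apply hx
        rw [hm, IsLocalRing.mem_maximalIdeal]
        intro hbunit
        exact hs0 (by
          obtain ⟨u, hu⟩ := hbunit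
          calc s = (↑u⁻¹ * b) * s := by rw [← hu]; simp
          _ = ↑u⁻¹ * (b * s) := by ring
          _ = 0 := by rw [hb, mul_zero])
      have hbotsmul : Ideal.span {s} • (⊤ : Submodule R M) = ⊥ := by
        rw [eq_bot_iff]
        refine Submodule.smul_le.mpr ?_
        intro t ht y _
        obtain ⟨cc, rfl⟩ := Ideal.mem_span_singleton'.mp ht
        rw [mul_smul, Module.mem_annihilator.mp hs y, smul_zero]
        exact Submodule.zero_mem ⊥
      rw [hbotsmul] at hmem
      exact (Submodule.mem_bot R).mp hmem
    -- minimal power killing M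
    have hex : ∃ k : ℕ, (m ^ k : Ideal R) • (⊤ : Submodule R M) = ⊥ := by
      refine ⟨N, eq_bot_iff.mpr (Submodule.smul_le.mpr fun t ht y _ => ?_)⟩
      rw [Module.mem_annihilator.mp (hN ht) y]
      exact Submodule.zero_mem ⊥
    classical
    have hkne : Nat.find hex ≠ 0 := by
      intro h0
      have hkspec := Nat.find_spec hex
      rw [h0, pow_zero, Ideal.one_eq_top, Submodule.top_smul] at hkspec
      obtain ⟨x, hx⟩ := exists_ne (0 : M)
      apply hx
      have hxt : x ∈ (⊤ : Submodule R M) := trivial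
      rw [hkspec] at hxt
      exact (Submodule.mem_bot R).mp hxt
    obtain ⟨k', hk'⟩ := Nat.exists_eq_succ_of_ne_zero hkne
    have hkspec : (m ^ (k' + 1) : Ideal R) • (⊤ : Submodule R M) = ⊥ := by
      have h0 := Nat.find_spec hex
      rwa [hk'] at h0
    have hUne : (m ^ k' : Ideal R) • (⊤ : Submodule R M) ≠ ⊥ :=
      Nat.find_min hex (by omega)
    apply hUne
    rw [eq_bot_iff]
    intro x hx
    rw [Submodule.mem_bot]
    apply socle0
    intro b hb
    have : b • x ∈ (m ^ (k' + 1) : Ideal R) • (⊤ : Submodule R M) := by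
      rw [pow_succ', ← Ideal.smul_eq_mul, Submodule.smul_assoc]
      exact Submodule.smul_mem_smul hb hx
    rw [hkspec] at this
    exact (Submodule.mem_bot R).mp this
  refine ⟨stepE, ?_⟩
  rw [stepE] at hN
  exact aux_artinian (le_bot_iff.mp hN)
end

section
/- Let (R, m) be a commutative noetherian local ring and M a nonzero cyclic reduced excellent R-module, i.e. M is generated by one element, I•M = γ_I(M) for every ideal I of R, and the only submodule U of M with m•U = U is U = 0. Then M is isomorphic to R as an R-module, R is artinian, and the socle So(R) = { r ∈ R : m•r = 0 } is a simple R-module; in particular R is a quasi-Frobenius ring. -/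
/-!
Excellence at the principal ideals `Ra` says that `M` is principally injective: if
`ann a ⊆ ann c` then `c ∈ aM`. For `a ∈ 𝔪` the chain `ann aⁿ` stabilises, so `aⁿM ⊆ aⁿ⁺¹M` and
Nakayama gives `aⁿM = 0`. An associated prime of `M` therefore equals `𝔪 = ann c` with `c ≠ 0`,
and principal injectivity applied to `c` shows that `M` is faithful, hence `M ≅ R` as `M` is
cyclic. Thus `R` is principally injective, so `𝔪` is nil and `R` is artinian, and any nonzero
socle element generates the socle, which is therefore simple.

Self-injectivity: if `𝔪a ⊆ I`, then `z ↦ za` maps `ann I` into the socle with kernel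
`ann (I + Ra)`, so `ℓ(ann I) ≤ ℓ(ann (I + Ra)) + 1`. Hence `ℓ(ann I) + ℓ(I)` is monotone in `I`,
so it is constantly `ℓ(R)`; this forces `ann (ann I) = I` and `ann (I ∩ J) = ann I + ann J`,
which is what is needed to extend maps `I → R` generator by generator (Baer's criterion).
-/

open IsLocalRing
open scoped Pointwise

namespace Module

variable (R M : Type*) [CommRing R] [AddCommGroup M] [Module R M]

/-- `M` is principally injective if every linear map `Ra → M` extends to `R`. Such a map is
`ra ↦ rc` for some `c` with `ann a ⊆ ann c`, and an extension is `r ↦ ry` with `ay = c`. -/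
def IsPrincipallyInjective : Prop :=
  ∀ (a : R) (c : M), (∀ r : R, r * a = 0 → r • c = 0) → ∃ y : M, a • y = c

variable {R M}

theorem isPrincipallyInjective_of_iSup_range_le_smul_top
    (hM : ∀ a : R, ⨆ f : Ideal.span {a} →ₗ[R] M, LinearMap.range f ≤ Ideal.span {a} • ⊤) :
    IsPrincipallyInjective R M := by
  intro a c hc
  have hker : Ideal.torsionOf R R a ≤ LinearMap.ker (LinearMap.toSpanSingleton R M c) :=
    fun r hr => hc r hr
  let f : Ideal.span {a} →ₗ[R] M := (Ideal.torsionOf R R a).liftQ _ hker ∘ₗ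
    (Ideal.quotTorsionOfEquivSpanSingleton R R a).symm.toLinearMap
  have hfa : f ⟨a, Ideal.mem_span_singleton_self a⟩ = c := by
    have : (Ideal.quotTorsionOfEquivSpanSingleton R R a).symm
        ⟨a, Ideal.mem_span_singleton_self a⟩ = Submodule.Quotient.mk 1 := by
      rw [LinearEquiv.symm_apply_eq, Ideal.quotTorsionOfEquivSpanSingleton_apply_mk, one_smul]
    rw [LinearMap.comp_apply, LinearEquiv.coe_coe, this, Submodule.liftQ_apply,
      LinearMap.toSpanSingleton_apply, one_smul]
  have hc : c ∈ Ideal.span {a} • (⊤ : Submodule R M) :=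
    hM a (le_iSup (fun f : Ideal.span {a} →ₗ[R] M => LinearMap.range f) f ⟨_, hfa⟩)
  rw [Submodule.ideal_span_singleton_smul, Submodule.mem_smul_pointwise_iff_exists] at hc
  obtain ⟨y, -, hy⟩ := hc
  exact ⟨y, hy⟩

variable {N : Type*} [AddCommGroup N] [Module R N]

theorem IsPrincipallyInjective.of_linearEquiv (hM : IsPrincipallyInjective R M) (e : M ≃ₗ[R] N) :
    IsPrincipallyInjective R N := by
  intro a c hc
  obtain ⟨y, hy⟩ := hM a (e.symm c) fun r hr => by rw [← map_smul, hc r hr, map_zero]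
  exact ⟨e y, by rw [← map_smul, hy, LinearEquiv.apply_symm_apply]⟩

theorem IsPrincipallyInjective.jacobson_le_radical_annihilator [IsNoetherianRing R]
    [Module.Finite R M] (hM : IsPrincipallyInjective R M) :
    (⊥ : Ideal R).jacobson ≤ (Module.annihilator R M).radical := by
  intro a ha
  obtain ⟨n, hstab⟩ := monotone_stabilizes_iff_noetherian.mpr inferInstance
    (LinearMap.mulLeft R a).iterateKer
  have hker : ∀ r : R, r * a ^ (n + 1) = 0 → r * a ^ n = 0 := by
    intro r hr
    have hr : r ∈ (LinearMap.mulLeft R a).iterateKer (n + 1) := by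
      simpa [LinearMap.pow_mulLeft, mul_comm] using hr
    rw [← hstab (n + 1) n.le_succ] at hr
    simpa [LinearMap.pow_mulLeft, mul_comm] using hr
  set P : Submodule R M := a ^ n • ⊤
  have hP : P ≤ Ideal.span {a} • P := by
    intro x hx
    rw [Submodule.ideal_span_singleton_smul]
    rw [Submodule.mem_smul_pointwise_iff_exists] at hx ⊢
    obtain ⟨x, -, rfl⟩ := hx
    obtain ⟨y, hy⟩ := hM (a ^ (n + 1)) (a ^ n • x) fun r hr => by
      rw [smul_smul, hker r hr, zero_smul]
    refine ⟨a ^ n • y, ?_, ?_⟩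
    · exact Submodule.smul_mem_pointwise_smul _ _ _ trivial
    · rw [← hy, smul_smul, pow_succ']
  have hP0 := Submodule.eq_bot_of_le_smul_of_le_jacobson_bot _ P (IsNoetherian.noetherian P) hP
    ((Ideal.span_singleton_le_iff_mem _).mpr ha)
  refine ⟨n, Module.mem_annihilator.mpr fun x => ?_⟩
  rw [← Submodule.mem_bot R, ← hP0]
  exact Submodule.smul_mem_pointwise_smul _ _ _ trivial

theorem exists_ne_zero_forall_smul_eq_zero [IsNoetherianRing R] [IsLocalRing R] [Nontrivial M]
    (hM : maximalIdeal R ≤ (Module.annihilator R M).radical) :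
    ∃ c : M, c ≠ 0 ∧ ∀ a ∈ maximalIdeal R, a • c = 0 := by
  obtain ⟨P, hP⟩ := associatedPrimes.nonempty R M
  obtain ⟨hPrime, c, rfl⟩ := isAssociatedPrime_iff.mp hP
  refine ⟨c, fun hc => hPrime.ne_top ?_, fun a ha => ?_⟩
  · simp [hc]
  · obtain ⟨n, hn⟩ := hM ha
    have : a ^ n ∈ (⊥ : Submodule R M).colon {c} :=
      Submodule.mem_colon_singleton.mpr (Module.mem_annihilator.mp hn c)
    simpa [Submodule.mem_colon_singleton] using hPrime.mem_of_pow_mem n this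

theorem IsPrincipallyInjective.annihilator_eq_bot [IsNoetherianRing R] [IsLocalRing R]
    [Module.Finite R M] [Nontrivial M] (hM : IsPrincipallyInjective R M) :
    Module.annihilator R M = ⊥ := by
  obtain ⟨c, hc, hmc⟩ := exists_ne_zero_forall_smul_eq_zero (M := M)
    ((maximalIdeal_le_jacobson ⊥).trans hM.jacobson_le_radical_annihilator)
  refine eq_bot_iff.mpr fun a ha => by_contra fun ha0 => hc ?_
  have hann : Ideal.torsionOf R R a ≤ maximalIdeal R :=
    le_maximalIdeal (mt (Ideal.torsionOf_eq_top_iff (R := R) a).mp ha0)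
  obtain ⟨y, rfl⟩ := hM a c fun r hr => hmc r (hann hr)
  exact Module.mem_annihilator.mp ha y

theorem nonempty_linearEquiv_self_of_span_singleton_eq_top {x : M}
    (hx : Submodule.span R {x} = ⊤) (hM : Module.annihilator R M = ⊥) :
    Nonempty (M ≃ₗ[R] R) := by
  refine ⟨(LinearEquiv.ofBijective (LinearMap.toSpanSingleton R M x) ⟨?_, ?_⟩).symm⟩
  · refine LinearMap.ker_eq_bot.mp (eq_bot_iff.mpr fun r hr => ?_)
    rw [← hM, ← Submodule.annihilator_top, ← hx, Submodule.mem_annihilator_span_singleton]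
    exact hr
  · rw [← LinearMap.range_eq_top, ← LinearMap.span_singleton_eq_range, hx]

end Module

namespace Ideal

variable {R : Type*} [CommRing R]

theorem torsionBySet_eq_annihilator (I : Ideal R) :
    Submodule.torsionBySet R R I = I.annihilator := by
  ext r
  simp [Submodule.mem_torsionBySet_iff, Submodule.mem_annihilator, mul_comm]

theorem le_annihilator_annihilator (I : Ideal R) : I ≤ I.annihilator.annihilator :=
  fun r hr => Submodule.mem_annihilator.mpr fun s hs => by
    rw [smul_eq_mul, mul_comm]
    exact Submodule.mem_annihilator.mp hs r hr

theorem exists_eq_mul_sup_of_annihilator_inf {I J : Ideal R}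
    (hIJ : (I ⊓ J).annihilator = I.annihilator ⊔ J.annihilator)
    (hI : ∀ g : I →ₗ[R] R, ∃ t : R, ∀ x (hx : x ∈ I), g ⟨x, hx⟩ = t * x)
    (hJ : ∀ g : J →ₗ[R] R, ∃ t : R, ∀ x (hx : x ∈ J), g ⟨x, hx⟩ = t * x)
    (g : ↥(I ⊔ J) →ₗ[R] R) : ∃ t : R, ∀ x (hx : x ∈ I ⊔ J), g ⟨x, hx⟩ = t * x := by
  obtain ⟨s, hs⟩ := hI (g ∘ₗ Submodule.inclusion le_sup_left)
  obtain ⟨t, ht⟩ := hJ (g ∘ₗ Submodule.inclusion le_sup_right)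
  have hst : s - t ∈ (I ⊓ J).annihilator := Submodule.mem_annihilator.mpr fun x hx => by
    rw [smul_eq_mul, sub_mul, ← hs x hx.1, ← ht x hx.2]
    exact sub_self _
  rw [hIJ] at hst
  obtain ⟨u, hu, v, hv, huv⟩ := Submodule.mem_sup.mp hst
  refine ⟨s - u, fun x hx => ?_⟩
  obtain ⟨y, hy, z, hz, rfl⟩ := Submodule.mem_sup.mp hx
  have hg : g ⟨y + z, hx⟩ =
      g ⟨y, Submodule.mem_sup_left hy⟩ + g ⟨z, Submodule.mem_sup_right hz⟩ := by
    rw [← map_add]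
    rfl
  have huy : u * y = 0 := Submodule.mem_annihilator.mp hu y hy
  have hvz : v * z = 0 := Submodule.mem_annihilator.mp hv z hz
  rw [hg, show g ⟨y, _⟩ = s * y from hs y hy, show g ⟨z, _⟩ = t * z from ht z hz]
  linear_combination huy - hvz + z * huv

end Ideal

theorem Submodule.length_lt_length_of_lt {R M : Type*} [Ring R] [AddCommGroup M] [Module R M]
    [IsArtinian R M] [IsNoetherian R M] {N N' : Submodule R M} (h : N < N') :
    Module.length R N < Module.length R N' := by
  simpa only [Module.length_submodule] using Submodule.height_strictMono h

section LocalRing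

variable {R : Type*} [CommRing R] [IsLocalRing R]
  [IsSimpleModule R (maximalIdeal R).annihilator]

theorem Ideal.length_annihilator_le_length_annihilator_sup_add_one {I : Ideal R} {a : R}
    (ha : ∀ u ∈ maximalIdeal R, u * a ∈ I) :
    Module.length R I.annihilator ≤ Module.length R (I ⊔ Ideal.span {a}).annihilator + 1 := by
  let φ : I.annihilator →ₗ[R] R := LinearMap.mulRight R a ∘ₗ I.annihilator.subtype
  have hker : LinearMap.ker φ.rangeRestrict =
      Submodule.comap I.annihilator.subtype (I ⊔ Ideal.span {a}).annihilator := by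
    ext z
    simp [φ, Submodule.annihilator_sup]
  have hrange : LinearMap.range φ ≤ (maximalIdeal R).annihilator := by
    rintro _ ⟨z, rfl⟩
    refine Submodule.mem_annihilator.mpr fun u hu => ?_
    simpa [φ, mul_assoc, mul_comm a u] using Submodule.mem_annihilator.mp z.2 _ (ha u hu)
  rw [Module.length_eq_add_of_exact _ φ.rangeRestrict (Submodule.subtype_injective _)
    φ.surjective_rangeRestrict (LinearMap.exact_subtype_ker_map _),
    ((LinearEquiv.ofEq _ _ hker).trans (Submodule.comapSubtypeEquivOfLe
      (Submodule.annihilator_mono le_sup_left))).length_eq]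
  gcongr
  calc Module.length R (LinearMap.range φ)
      ≤ Module.length R (maximalIdeal R).annihilator :=
        Module.length_le_of_injective _ (Submodule.inclusion_injective hrange)
    _ = 1 := Module.length_eq_one _ _

end LocalRing

section ArtinianLocalRing

variable {R : Type*} [CommRing R] [IsArtinianRing R] [IsLocalRing R]

theorem maximalIdeal_le_radical_annihilator (M : Type*) [AddCommGroup M] [Module R M] :
    maximalIdeal R ≤ (Module.annihilator R M).radical := by
  rw [← Ring.KrullDimLE.nilradical_eq_maximalIdeal]
  exact Ideal.radical_mono bot_le

theorem Submodule.exists_mem_notMem_forall_smul_mem {M : Type*} [AddCommGroup M] [Module R M]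
    [IsNoetherian R M] {N N' : Submodule R M} (h : N < N') :
    ∃ a ∈ N', a ∉ N ∧ ∀ u ∈ maximalIdeal R, u • a ∈ N := by
  let Q := N' ⧸ N.comap N'.subtype
  have : Nontrivial Q := Submodule.Quotient.nontrivial_iff.mpr
    fun h' => h.not_ge (Submodule.comap_subtype_eq_top.mp h')
  obtain ⟨c, hc, hmc⟩ :=
    Module.exists_ne_zero_forall_smul_eq_zero (maximalIdeal_le_radical_annihilator (R := R) Q)
  obtain ⟨⟨a, ha⟩, rfl⟩ := Submodule.Quotient.mk_surjective _ c
  refine ⟨a, ha, fun haN => hc ((Submodule.Quotient.mk_eq_zero _).mpr haN), fun u hu => ?_⟩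
  have := hmc u hu
  rwa [← Submodule.Quotient.mk_smul, Submodule.Quotient.mk_eq_zero] at this

variable [IsSimpleModule R (maximalIdeal R).annihilator]

namespace Ideal

theorem length_annihilator_add_length_mono {I J : Ideal R} (h : I ≤ J) :
    Module.length R I.annihilator + Module.length R I ≤
      Module.length R J.annihilator + Module.length R J := by
  induction I using WellFoundedGT.induction with
  | _ I ih =>
  obtain rfl | hlt := h.eq_or_lt
  · rfl
  obtain ⟨a, haJ, haI, ha⟩ := Submodule.exists_mem_notMem_forall_smul_mem hlt
  set K := I ⊔ span {a}
  have hIK : I < K := left_lt_sup.mpr (by rwa [span_singleton_le_iff_mem])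
  calc Module.length R I.annihilator + Module.length R I
      ≤ Module.length R K.annihilator + 1 + Module.length R I := by
        gcongr; exact length_annihilator_le_length_annihilator_sup_add_one ha
    _ = Module.length R K.annihilator + (Module.length R I + 1) := by
        rw [add_assoc, add_comm 1]
    _ ≤ Module.length R K.annihilator + Module.length R K := by
        gcongr; exact Order.add_one_le_of_lt (Submodule.length_lt_length_of_lt hIK)
    _ ≤ Module.length R J.annihilator + Module.length R J :=
        ih K hIK (sup_le h ((span_singleton_le_iff_mem J).mpr haJ))

theorem length_annihilator_add_length (I : Ideal R) :
    Module.length R I.annihilator + Module.length R I = Module.length R R := by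
  have hann_top : (⊤ : Ideal R).annihilator = ⊥ := by
    rw [Submodule.annihilator_top, Module.annihilator_eq_bot]
    infer_instance
  refine le_antisymm ?_ ?_
  · have := length_annihilator_add_length_mono (le_top : I ≤ ⊤)
    rwa [hann_top, Module.length_bot, zero_add, Module.length_top] at this
  · have := length_annihilator_add_length_mono (bot_le : ⊥ ≤ I)
    rwa [Submodule.annihilator_bot, Module.length_top, Module.length_bot, add_zero] at this

theorem annihilator_annihilator (I : Ideal R) : I.annihilator.annihilator = I := by
  have hlen : Module.length R I.annihilator.annihilator = Module.length R I := by
    refine ENat.add_left_injective_of_ne_top (Module.length_ne_top (R := R) (M := I.annihilator)) ?_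
    dsimp only
    rw [length_annihilator_add_length, add_comm, length_annihilator_add_length]
  refine ((le_annihilator_annihilator I).eq_or_lt.resolve_right fun hlt => ?_).symm
  exact (Submodule.length_lt_length_of_lt hlt).ne hlen.symm

theorem annihilator_inf (I J : Ideal R) :
    (I ⊓ J).annihilator = I.annihilator ⊔ J.annihilator :=
  calc (I ⊓ J).annihilator
      = (I.annihilator.annihilator ⊓ J.annihilator.annihilator).annihilator := by
        rw [annihilator_annihilator, annihilator_annihilator]
    _ = (I.annihilator ⊔ J.annihilator).annihilator.annihilator := by
        rw [Submodule.annihilator_sup]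
    _ = I.annihilator ⊔ J.annihilator := annihilator_annihilator _

end Ideal

end ArtinianLocalRing

namespace Module.IsPrincipallyInjective

variable {R : Type*} [CommRing R]

theorem isArtinianRing [IsNoetherianRing R] [IsLocalRing R] (hR : IsPrincipallyInjective R R) :
    IsArtinianRing R := by
  rw [isArtinianRing_iff_isNilpotent_maximalIdeal,
    Ideal.FG.isNilpotent_iff_le_nilradical (IsNoetherian.noetherian _)]
  have hnil := hR.jacobson_le_radical_annihilator
  rw [Module.annihilator_eq_bot.mpr inferInstance] at hnil
  exact (maximalIdeal_le_jacobson ⊥).trans hnil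

variable [IsArtinianRing R] [IsLocalRing R]

theorem isSimpleModule_annihilator_maximalIdeal (hR : IsPrincipallyInjective R R) :
    IsSimpleModule R (maximalIdeal R).annihilator := by
  have hsocle : ∀ s ∈ (maximalIdeal R).annihilator, s ≠ 0 →
      (maximalIdeal R).annihilator ≤ Ideal.span {s} := by
    intro s _ hs s' hs'
    have hann : Ideal.torsionOf R R s ≤ maximalIdeal R :=
      le_maximalIdeal (mt (Ideal.torsionOf_eq_top_iff (R := R) s).mp hs)
    obtain ⟨y, rfl⟩ := hR s s' fun r hr => by
      rw [smul_eq_mul, mul_comm]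
      exact Submodule.mem_annihilator.mp hs' r (hann hr)
    exact Ideal.mul_mem_right y _ (Ideal.mem_span_singleton_self s)
  obtain ⟨c, hc, hmc⟩ :=
    Module.exists_ne_zero_forall_smul_eq_zero (maximalIdeal_le_radical_annihilator (R := R) R)
  have hcS : c ∈ (maximalIdeal R).annihilator := Submodule.mem_annihilator.mpr fun u hu => by
    rw [smul_eq_mul, mul_comm]
    exact hmc u hu
  refine isSimpleModule_iff_isAtom.mpr ⟨fun h => hc ((Submodule.mem_bot R).mp (h ▸ hcS)), ?_⟩
  intro T hT
  by_contra hT0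
  obtain ⟨t, htT, ht⟩ := Submodule.exists_mem_ne_zero_of_ne_bot hT0
  exact hT.not_ge ((hsocle t (hT.le htT) ht).trans ((Ideal.span_singleton_le_iff_mem T).mpr htT))

theorem baer (hR : IsPrincipallyInjective R R) : Module.Baer R R := by
  have := hR.isSimpleModule_annihilator_maximalIdeal
  intro I g
  suffices ∀ g : I →ₗ[R] R, ∃ t : R, ∀ x (hx : x ∈ I), g ⟨x, hx⟩ = t * x by
    obtain ⟨t, ht⟩ := this g
    exact ⟨LinearMap.mulLeft R t, fun x hx => (ht x hx).symm⟩
  clear g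
  induction I, IsNoetherian.noetherian I using Submodule.fg_induction with
  | singleton a =>
    intro g
    obtain ⟨y, hy⟩ := hR a (g ⟨a, Submodule.mem_span_singleton_self a⟩) fun r hr => by
      rw [← map_smul, show r • (⟨a, _⟩ : R ∙ a) = 0 from Subtype.ext hr, map_zero]
    refine ⟨y, fun x hx => ?_⟩
    obtain ⟨r, rfl⟩ := Submodule.mem_span_singleton.mp hx
    rw [show (⟨r • a, hx⟩ : R ∙ a) = r • ⟨a, Submodule.mem_span_singleton_self a⟩ from rfl,
      map_smul, ← hy, smul_eq_mul, smul_eq_mul, smul_eq_mul]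
    ring
  | sup I J _ _ hI hJ =>
    exact Ideal.exists_eq_mul_sup_of_annihilator_inf (Ideal.annihilator_inf I J) hI hJ

end Module.IsPrincipallyInjective

theorem cyclic_reduced_excellent_QF_general
    {R : Type u} [CommRing R] [IsNoetherianRing R] [IsLocalRing R]
    (M : Type u) [AddCommGroup M] [Module R M]
    (hcyc : ∃ x : M, Submodule.span R {x} = ⊤)
    (hM : ∀ I : Ideal R, I • (⊤ : Submodule R M) = ⨆ f : I →ₗ[R] M, LinearMap.range f)
    (hne : Nontrivial M) :
    Nonempty (M ≃ₗ[R] R) ∧ IsArtinianRing R ∧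
      IsSimpleModule R
        ↥(Submodule.torsionBySet R R ((IsLocalRing.maximalIdeal R : Ideal R) : Set R)) ∧
      Module.Injective R R := by
  obtain ⟨x, hx⟩ := hcyc
  have : Module.Finite R M := ⟨⟨{x}, by simpa using hx⟩⟩
  have hPM : Module.IsPrincipallyInjective R M :=
    Module.isPrincipallyInjective_of_iSup_range_le_smul_top fun a => (hM _).ge
  obtain ⟨e⟩ :=
    Module.nonempty_linearEquiv_self_of_span_singleton_eq_top hx hPM.annihilator_eq_bot
  have hPR := hPM.of_linearEquiv e
  have hart := hPR.isArtinianRing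
  refine ⟨⟨e⟩, hart, ?_, hPR.baer.injective⟩
  rw [Ideal.torsionBySet_eq_annihilator]
  exact hPR.isSimpleModule_annihilator_maximalIdeal

/-- Folgerung 1.13 (h): Let `M` be a nonzero cyclic reduced excellent `R`-module. Then
`M ≅ R`, `R` is artinian and the socle `So(R)` is simple; in particular `R` is a
quasi-Frobenius ring (artinian and self-injective). -/
theorem cyclic_reduced_excellent_QF
    {R : Type u} [CommRing R] [IsNoetherianRing R] [IsLocalRing R]
    (M : Type u) [AddCommGroup M] [Module R M]
    (hcyc : ∃ x : M, Submodule.span R {x} = ⊤)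
    (hM : ∀ I : Ideal R, I • (⊤ : Submodule R M) = ⨆ f : I →ₗ[R] M, LinearMap.range f)
    (hred : ∀ U : Submodule R M, IsLocalRing.maximalIdeal R • U = U → U = ⊥)
    (hne : Nontrivial M) :
    Nonempty (M ≃ₗ[R] R) ∧ IsArtinianRing R ∧
      IsSimpleModule R
        ↥(Submodule.torsionBySet R R ((IsLocalRing.maximalIdeal R : Ideal R) : Set R)) ∧
      Module.Injective R R :=
  cyclic_reduced_excellent_QF_general M hcyc hM hne
end

section
/- Let (R, m) be a commutative noetherian local ring. Then R is excellent as a module over itself (i.e. I = γ_I(R) for every ideal I of R) if and only if R is a quasi-Frobenius ring, i.e. R is artinian and R is injective as a module over itself. -/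
/-!
The trace condition says that every `R`-linear map `I → R` lands in `I`. Applied to the map
`r • x ↦ r • a` on `(x)`, it gives: if `ann x ⊆ ann a` then `a ∈ (x)`.

For `x ∈ 𝔪` the chain `ann (x ^ k)` stabilises, so `x ^ n ∈ (x ^ (n + 1))`, which forces
`x ^ n = 0` because `1 - c x` is a unit; hence `𝔪` is nilpotent and `R` is artinian. Any nonzero
`y` in the socle `ann 𝔪` has `ann y = 𝔪`, so the socle is `(y) ≅ R ⧸ 𝔪` and has length at most one.

A simple module `S` maps into `R` only through the socle, so `length (S →ₗ R) ≤ 1`, and left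
exactness of `Hom (-, R)` along a composition series gives `length (M →ₗ R) ≤ length M` for all `M`.
In `0 → Hom (R ⧸ I, R) → Hom (R, R) → Hom (I, R)` the image of restriction therefore has length
at least `length R - length (R ⧸ I) = length I ≥ length Hom (I, R)`, so restriction is onto: this is
Baer's criterion. Conversely, if `R` is self-injective every `f : I → R` is multiplication by
`f̃ 1` for an extension `f̃`, so `f (I) ⊆ I`.
-/

universe u

open IsLocalRing Submodule

section TraceCondition

variable {R : Type*} [CommRing R]

theorem iSup_range_eq_self_iff_forall_range_le (I : Ideal R) :
    (⨆ f : I →ₗ[R] R, LinearMap.range f) = I ↔ ∀ f : I →ₗ[R] R, LinearMap.range f ≤ I := by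
  refine ⟨fun h f ↦ (le_iSup (fun f : I →ₗ[R] R ↦ LinearMap.range f) f).trans h.le,
    fun h ↦ le_antisymm (iSup_le h) ?_⟩
  simpa using le_iSup (fun f : I →ₗ[R] R ↦ LinearMap.range f) I.subtype

theorem Module.Baer.range_le (h : Module.Baer R R) (I : Ideal R) (f : I →ₗ[R] R) :
    LinearMap.range f ≤ I := by
  rintro _ ⟨⟨x, hx⟩, rfl⟩
  obtain ⟨g, hg⟩ := h I f
  rw [← hg x hx, ← mul_one x, ← smul_eq_mul, map_smul, smul_eq_mul]
  exact I.mul_mem_right _ hx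

theorem mem_span_singleton_of_torsionOf_le
    (hR : ∀ (I : Ideal R) (f : I →ₗ[R] R), LinearMap.range f ≤ I) {x a : R}
    (h : Ideal.torsionOf R R x ≤ Ideal.torsionOf R R a) : a ∈ Ideal.span {x} := by
  let f : Ideal.span {x} →ₗ[R] R := (R ∙ a).subtype ∘ₗ
    (Ideal.quotTorsionOfEquivSpanSingleton R R a).toLinearMap ∘ₗ
    Submodule.mapQ _ _ LinearMap.id h ∘ₗ
    (Ideal.quotTorsionOfEquivSpanSingleton R R x).symm.toLinearMap
  have hx : (Ideal.quotTorsionOfEquivSpanSingleton R R x).symm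
      ⟨x, mem_span_singleton_self x⟩ = Submodule.Quotient.mk 1 := by
    rw [LinearEquiv.symm_apply_eq, Ideal.quotTorsionOfEquivSpanSingleton_apply_mk, one_smul]
  have hfx : f ⟨x, mem_span_singleton_self x⟩ = a := by
    simp only [f, LinearMap.comp_apply, LinearEquiv.coe_coe, hx, mapQ_apply, LinearMap.id_apply,
      Ideal.quotTorsionOfEquivSpanSingleton_apply_mk, one_smul, subtype_apply]
  exact hR _ f ⟨_, hfx⟩

theorem pow_eq_zero_of_mem_maximalIdeal [IsNoetherianRing R] [IsLocalRing R]
    (hR : ∀ (I : Ideal R) (f : I →ₗ[R] R), LinearMap.range f ≤ I) {x : R}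
    (hx : x ∈ maximalIdeal R) : ∃ n, x ^ n = 0 := by
  obtain ⟨n, hn⟩ := monotone_stabilizes_iff_noetherian.mpr inferInstance
    (LinearMap.mulLeft R x).iterateKer
  have hker (k : ℕ) : (LinearMap.mulLeft R x).iterateKer k = Ideal.torsionOf R R (x ^ k) := by
    ext r
    simp only [LinearMap.iterateKer, LinearMap.pow_mulLeft, OrderHom.coe_mk, LinearMap.mem_ker,
      LinearMap.mulLeft_apply, mul_comm, Ideal.mem_torsionOf_iff, smul_eq_mul]
  have hann : Ideal.torsionOf R R (x ^ (n + 1)) ≤ Ideal.torsionOf R R (x ^ n) := by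
    rw [← hker, ← hker, hn (n + 1) n.le_succ]
  obtain ⟨c, hc⟩ := Ideal.mem_span_singleton'.mp (mem_span_singleton_of_torsionOf_le hR hann)
  have hunit : IsUnit (1 - c * x) :=
    isUnit_one_sub_self_of_mem_nonunits _ ((mem_maximalIdeal _).mp (Ideal.mul_mem_left _ c hx))
  refine ⟨n, hunit.mul_left_eq_zero.mp ?_⟩
  linear_combination -hc

theorem isArtinianRing_of_forall_range_le [IsNoetherianRing R] [IsLocalRing R]
    (hR : ∀ (I : Ideal R) (f : I →ₗ[R] R), LinearMap.range f ≤ I) : IsArtinianRing R := by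
  rw [isArtinianRing_iff_isNilpotent_maximalIdeal,
    Ideal.FG.isNilpotent_iff_le_nilradical (IsNoetherian.noetherian _)]
  exact fun x hx ↦ pow_eq_zero_of_mem_maximalIdeal hR hx

theorem length_torsionBySet_maximalIdeal_le_one [IsLocalRing R]
    (hR : ∀ (I : Ideal R) (f : I →ₗ[R] R), LinearMap.range f ≤ I) :
    Module.length R (torsionBySet R R (maximalIdeal R)) ≤ 1 := by
  set T := torsionBySet R R (maximalIdeal R)
  rcases eq_or_ne T ⊥ with hT | hT
  · rw [hT, Module.length_bot]
    exact zero_le_one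
  obtain ⟨y, hyT, hy⟩ := exists_mem_ne_zero_of_ne_bot hT
  have hm_le {a : R} (ha : a ∈ T) : maximalIdeal R ≤ Ideal.torsionOf R R a := fun c hc ↦
    (Ideal.mem_torsionOf_iff _ _).mpr ((mem_torsionBySet_iff _ _).mp ha ⟨c, hc⟩)
  have hy' : Ideal.torsionOf R R y = maximalIdeal R :=
    ((maximalIdeal.isMaximal R).eq_of_le (by rwa [Ne, Ideal.torsionOf_eq_top_iff])
      (hm_le hyT)).symm
  have hle : T ≤ R ∙ y := fun a ha ↦ mem_span_singleton_of_torsionOf_le hR (hy' ▸ hm_le ha)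
  calc Module.length R T ≤ Module.length R (R ∙ y) :=
        Module.length_le_of_injective _ (inclusion_injective hle)
    _ = Module.length R (R ⧸ maximalIdeal R) := by
        rw [← hy', (Ideal.quotTorsionOfEquivSpanSingleton R R y).length_eq]
    _ = 1 := Module.length_eq_one_iff.mpr
        (isSimpleModule_iff_isCoatom.mpr (maximalIdeal.isMaximal R).out)

end TraceCondition

section LengthOfDual

variable {R : Type*} [CommRing R] {X : Type*} [AddCommGroup X] [Module R X]

theorem length_linearMap_eq_add {M : Type*} [AddCommGroup M] [Module R M] (N : Submodule R M) :
    Module.length R (M →ₗ[R] X) = Module.length R ((M ⧸ N) →ₗ[R] X) +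
      Module.length R (LinearMap.range (LinearMap.lcomp R X N.subtype)) := by
  have hexact := LinearMap.exact_lcomp_of_exact_of_surjective X (LinearMap.exact_subtype_mkQ N)
    N.mkQ_surjective
  refine Module.length_eq_add_of_exact _ _
    (LinearMap.lcomp_injective_of_surjective _ N.mkQ_surjective)
    (LinearMap.surjective_rangeRestrict _) ?_
  rw [LinearMap.exact_iff, LinearMap.ker_rangeRestrict, ← LinearMap.exact_iff]
  exact hexact

theorem length_linearMap_le_of_isSimpleModule [IsLocalRing R] (S : Type*) [AddCommGroup S]
    [Module R S] [IsSimpleModule R S] :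
    Module.length R (S →ₗ[R] X) ≤ Module.length R (torsionBySet R X (maximalIdeal R)) := by
  have := IsSimpleModule.nontrivial R S
  obtain ⟨z, hz⟩ := exists_ne (0 : S)
  have hann : Module.annihilator R S = maximalIdeal R :=
    eq_maximalIdeal IsSimpleModule.annihilator_isMaximal
  let ev : (S →ₗ[R] X) →ₗ[R] torsionBySet R X (maximalIdeal R) :=
    LinearMap.codRestrict _ (LinearMap.applyₗ z) fun f ↦ (mem_torsionBySet_iff _ _).mpr
      fun ⟨c, hc⟩ ↦ by
        rw [SetLike.mem_coe, ← hann, Module.mem_annihilator] at hc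
        simp [← map_smul, hc]
  refine Module.length_le_of_injective ev ((injective_iff_map_eq_zero ev).mpr fun f hf ↦ ?_)
  ext w
  obtain ⟨r, rfl⟩ := IsSimpleModule.toSpanSingleton_surjective R hz w
  have hfz : f z = 0 := congrArg Subtype.val hf
  simp [hfz]

theorem length_linearMap_le_length [IsLocalRing R]
    (hX : Module.length R (torsionBySet R X (maximalIdeal R)) ≤ 1)
    (M : Type*) [AddCommGroup M] [Module R M] :
    Module.length R (M →ₗ[R] X) ≤ Module.length R M := by
  by_cases hM : IsFiniteLength R M
  swap
  · rw [← Module.length_ne_top_iff, not_not] at hM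
    simp [hM]
  induction hM with
  | of_subsingleton => simp [Module.length_eq_zero]
  | @of_simple_quotient M _ _ N _ _ ih =>
    calc Module.length R (M →ₗ[R] X)
        = Module.length R ((M ⧸ N) →ₗ[R] X) +
          Module.length R (LinearMap.range (LinearMap.lcomp R X N.subtype)) :=
          length_linearMap_eq_add N
      _ ≤ 1 + Module.length R (N →ₗ[R] X) :=
          add_le_add ((length_linearMap_le_of_isSimpleModule _).trans hX)
            (Module.length_le_of_injective _ (injective_subtype _))
      _ ≤ 1 + Module.length R N := by gcongr
      _ = Module.length R M := by
          rw [Module.length_eq_add_of_exact N.subtype N.mkQ N.injective_subtype N.mkQ_surjective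
            (LinearMap.exact_subtype_mkQ N), Module.length_eq_one R (M ⧸ N), add_comm]

theorem Module.Baer.of_length_torsionBySet_maximalIdeal_le_one [IsLocalRing R] [IsArtinianRing R]
    (h : Module.length R (torsionBySet R R (maximalIdeal R)) ≤ 1) : Module.Baer R R := by
  intro I g
  set ρ := LinearMap.lcomp R R I.subtype
  suffices LinearMap.range ρ = ⊤ by
    obtain ⟨g', hg'⟩ : g ∈ LinearMap.range ρ := this ▸ mem_top
    exact ⟨g', fun x hx ↦ LinearMap.congr_fun hg' ⟨x, hx⟩⟩
  have hI := length_linearMap_le_length h I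
  have hQ := length_linearMap_le_length h (R ⧸ I)
  have hR := length_linearMap_eq_add (X := R) I
  rw [(LinearMap.ringLmapEquivSelf R R R).length_eq, Module.length_eq_add_of_exact I.subtype
    I.mkQ I.injective_subtype I.mkQ_surjective (LinearMap.exact_subtype_mkQ I)] at hR
  have hρ : Module.length R (I →ₗ[R] R) ≤ Module.length R (LinearMap.range ρ) := by
    refine hI.trans ((ENat.add_le_add_iff_right (Module.length_ne_top (R := R) (M := R ⧸ I))).mp ?_)
    rw [hR, add_comm]
    exact add_le_add_right hQ _
  obtain ⟨_, _⟩ := isFiniteLength_iff_isNoetherian_isArtinian.mp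
    (Module.length_ne_top_iff.mp (ne_top_of_le_ne_top Module.length_ne_top hI))
  by_contra hne
  exact (Submodule.length_lt hne).not_ge hρ

end LengthOfDual

/-- Folgerung 1.14 (Lindo): `R` is excellent as a module over itself, i.e. `γ_I(R) = I` for
every ideal `I`, iff `R` is a quasi-Frobenius ring (artinian and self-injective). -/
theorem self_excellent_iff_quasiFrobenius
    {R : Type u} [CommRing R] [IsNoetherianRing R] [IsLocalRing R] :
    (∀ I : Ideal R, (⨆ f : I →ₗ[R] R, LinearMap.range f) = I) ↔
      (IsArtinianRing R ∧ Module.Injective R R) := by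
  simp only [iSup_range_eq_self_iff_forall_range_le]
  refine ⟨fun hR ↦ ?_, fun ⟨_, hinj⟩ ↦ (Module.Baer.of_injective hinj).range_le⟩
  have := isArtinianRing_of_forall_range_le hR
  exact ⟨this, Module.Baer.injective
    (Module.Baer.of_length_torsionBySet_maximalIdeal_le_one
      (length_torsionBySet_maximalIdeal_le_one hR))⟩
end

section
/- Let (R, m) be a commutative noetherian local ring and I, J, a ideals of R. Then: (a) γ_I(R) is a good ideal, i.e. γ_{γ_I(R)}(R) = γ_I(R); (b) if I and J are isomorphic as R-modules, then γ_I(R) = γ_J(R); (c) if I is good (γ_I(R) = I) and a is an arbitrary ideal, then the ideal I :_R a = { r ∈ R : r•a ⊆ I } is good. -/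
section Helpers

variable {R : Type u} [CommRing R]

private lemma self_le_trace (I : Ideal R) :
    I ≤ ⨆ f : I →ₗ[R] R, LinearMap.range f := by
  have := le_iSup (fun f : I →ₗ[R] R => LinearMap.range f) I.subtype
  simpa using this

private lemma trace_le_of_mem {I K : Ideal R}
    (h : ∀ (f : I →ₗ[R] R) (x : I), f x ∈ K) :
    (⨆ f : I →ₗ[R] R, LinearMap.range f) ≤ K := by
  refine iSup_le fun f => ?_
  rintro _ ⟨x, rfl⟩
  exact h f x

end Helpers

/-- Lemma 2.1: (a) the trace ideal `γ_I(R)` is always good, i.e. `γ_{γ_I(R)}(R) = γ_I(R)`;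
(b) if `I ≅ J` as `R`-modules then `γ_I(R) = γ_J(R)`; (c) if `I` is good (`γ_I(R) = I`) and
`a` is any ideal, then `I :_R a` is good. -/
theorem trace_ideal_properties
    {R : Type u} [CommRing R] [IsNoetherianRing R] [IsLocalRing R]
    (I J a : Ideal R) :
    ((⨆ g : ↥(⨆ f : I →ₗ[R] R, LinearMap.range f) →ₗ[R] R, LinearMap.range g) =
      ⨆ f : I →ₗ[R] R, LinearMap.range f) ∧
    (Nonempty (I ≃ₗ[R] J) →
      (⨆ f : I →ₗ[R] R, LinearMap.range f) = ⨆ f : J →ₗ[R] R, LinearMap.range f) ∧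
    ((⨆ f : I →ₗ[R] R, LinearMap.range f) = I →
      (⨆ f : ↥(Submodule.colon I a) →ₗ[R] R, LinearMap.range f) = Submodule.colon I a) := by
  set T : Ideal R := ⨆ f : I →ₗ[R] R, LinearMap.range f with hT
  refine ⟨?_, ?_, ?_⟩
  · -- (a)
    refine le_antisymm (trace_le_of_mem fun f x => ?_) (self_le_trace T)
    obtain ⟨x, hx⟩ := x
    induction hx using Submodule.iSup_induction' with
    | mem g y hy =>
        obtain ⟨z, rfl⟩ := hy
        have hle : LinearMap.range g ≤ T := le_iSup _ g
        have : f ⟨g z, by exact hle ⟨z, rfl⟩⟩ =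
            (f ∘ₗ g.codRestrict T fun w => hle ⟨w, rfl⟩) z := rfl
        rw [this]
        have := le_iSup (fun h : I →ₗ[R] R => LinearMap.range h)
          (f ∘ₗ g.codRestrict T fun w => hle ⟨w, rfl⟩)
        exact this ⟨z, rfl⟩
    | zero =>
        have : (⟨(0 : R), Submodule.zero_mem T⟩ : T) = 0 := rfl
        rw [this, map_zero]; exact Submodule.zero_mem T
    | add x y hx hy ihx ihy =>
        have : (⟨x + y, Submodule.add_mem T hx hy⟩ : T) = ⟨x, hx⟩ + ⟨y, hy⟩ := rfl
        rw [this, map_add]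
        exact Submodule.add_mem T ihx ihy
  · -- (b)
    rintro ⟨e⟩
    have key : ∀ (A B : Ideal R) (e : A ≃ₗ[R] B),
        (⨆ f : A →ₗ[R] R, LinearMap.range f) ≤ ⨆ f : B →ₗ[R] R, LinearMap.range f := by
      intro A B e
      refine iSup_le fun f => ?_
      have hr : LinearMap.range (f ∘ₗ e.symm.toLinearMap) = LinearMap.range f := by
        rw [LinearMap.range_comp, LinearEquiv.range, Submodule.map_top]
      calc LinearMap.range f = LinearMap.range (f ∘ₗ e.symm.toLinearMap) := hr.symm
        _ ≤ _ := le_iSup (fun g : B →ₗ[R] R => LinearMap.range g) _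
    exact le_antisymm (key I J e) (key J I e.symm)
  · -- (c)
    intro hgood
    set K : Ideal R := Submodule.colon I a with hK
    have hIK : I ≤ K := fun r hr => Submodule.mem_colon.2 fun p hp => by
      exact Ideal.mul_mem_right p I hr
    refine le_antisymm (trace_le_of_mem fun f x => ?_) (self_le_trace K)
    obtain ⟨x, hx⟩ := x
    refine Submodule.mem_colon.2 fun p hp => ?_
    -- f ⟨x, hx⟩ • p = p • f ⟨x,hx⟩ = f (p • ⟨x,hx⟩) = f ⟨p*x, _⟩
    have hpx : p * x ∈ I := by
      have := Submodule.mem_colon.1 hx p hp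
      simpa [smul_eq_mul, mul_comm] using this
    have h1 : f ⟨x, hx⟩ • p = f ⟨p * x, hIK hpx⟩ := by
      have : (⟨p * x, hIK hpx⟩ : K) = p • ⟨x, hx⟩ := by
        ext; simp [smul_eq_mul]
      rw [this, map_smul, smul_eq_mul, smul_eq_mul, mul_comm]
    rw [h1]
    have : f ⟨p * x, hIK hpx⟩ = (f ∘ₗ Submodule.inclusion hIK) ⟨p * x, hpx⟩ := rfl
    rw [this]
    have hmem : (f ∘ₗ Submodule.inclusion hIK) ⟨p * x, hpx⟩ ∈ T :=
      le_iSup (fun g : I →ₗ[R] R => LinearMap.range g) _ ⟨_, rfl⟩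
    rwa [hgood] at hmem
end

section
/- Let (R, m) be a commutative noetherian local ring and I, J ideals of R that are isomorphic as R-modules. If I is good (γ_I(R) = I) and I has finite length as an R-module, then I = J. -/
/-- Folgerung 2.2: If the ideals `I ≅ J` are isomorphic as `R`-modules, `I` is good
(`γ_I(R) = I`) and `I` has finite length, then `I = J`. -/
theorem good_finiteLength_iso_eq
    {R : Type u} [CommRing R] [IsNoetherianRing R] [IsLocalRing R]
    (I J : Ideal R) (hiso : Nonempty (I ≃ₗ[R] J))
    (hgood : (⨆ f : I →ₗ[R] R, LinearMap.range f) = I)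
    (hlen : IsFiniteLength R I) :
    I = J := by
  obtain ⟨e⟩ := hiso
  -- trace ideals are isomorphism invariant
  have htr : (⨆ f : J →ₗ[R] R, LinearMap.range f) = (⨆ f : I →ₗ[R] R, LinearMap.range f) := by
    apply le_antisymm
    · exact iSup_le fun f => le_iSup_of_le (f ∘ₗ (e : I →ₗ[R] J))
        (le_of_eq (LinearMap.range_comp_of_range_eq_top f
          (LinearMap.range_eq_top.mpr e.surjective)).symm)
    · exact iSup_le fun f => le_iSup_of_le (f ∘ₗ (e.symm : J →ₗ[R] I))
        (le_of_eq (LinearMap.range_comp_of_range_eq_top f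
          (LinearMap.range_eq_top.mpr e.symm.surjective)).symm)
  have hJI : J ≤ I := by
    have hJ : J ≤ ⨆ f : J →ₗ[R] R, LinearMap.range f :=
      le_iSup_of_le J.subtype (Submodule.range_subtype J).ge
    calc J ≤ ⨆ f : J →ₗ[R] R, LinearMap.range f := hJ
    _ = ⨆ f : I →ₗ[R] R, LinearMap.range f := htr
    _ = I := hgood
  -- finite length ⇒ artinian ⇒ injective endomorphism surjective
  have hart : IsArtinian R I := (isFiniteLength_iff_isNoetherian_isArtinian.mp hlen).2
  set φ : I →ₗ[R] I := (Submodule.inclusion hJI) ∘ₗ (e : I →ₗ[R] J) with hφ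
  have hinj : Function.Injective φ :=
    fun a b h => e.injective (Submodule.inclusion_injective hJI h)
  have hsurj : Function.Surjective φ := IsArtinian.surjective_of_injective_endomorphism φ hinj
  apply le_antisymm _ hJI
  intro x hx
  obtain ⟨y, hy⟩ := hsurj ⟨x, hx⟩
  have : ((e y : J) : R) ∈ J := (e y).2
  have hval : ((e y : J) : R) = x := congrArg Subtype.val hy
  exact hval ▸ this
end

section
/- Let (R, m) be a commutative noetherian local ring, I an ideal of R, M an R-module and p a prime ideal of R. Then: (a) if M is I-excellent, then the localized module M_p over R_p is IR_p-excellent, where IR_p is the extension of I to R_p; (b) if M_p is IR_p-excellent over R_p and every element s ∈ R \ p acts injectively on M/IM (i.e. s•x̄ = 0 implies x̄ = 0 in M/IM), then M is I-excellent. -/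
/-!
Since `R` is noetherian, `I` is finitely presented, so every `R_p`-linear map `IR_p → M_p` is,
up to a unit of `R_p`, the localization of a map `I → M`. Hence `γ_{IR_p}(M_p) ⊆ γ_I(M)_p`, and
if `γ_I(M) = IM` this is `(IM)_p = IR_p M_p`. Conversely every map `I → M` localizes, so
`γ_I(M)` maps into `γ_{IR_p}(M_p)`; if the latter is `IR_p M_p = (IM)_p`, each `x ∈ γ_I(M)`
satisfies `s x ∈ IM` for some `s ∉ p`, and injectivity of `s` on `M/IM` gives `x ∈ IM`.
-/

/-- The trace `γ_I(M)` of `I` in `M`. -/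
def Ideal.traceIn {R : Type*} [CommSemiring R] (I : Ideal R) (M : Type*) [AddCommMonoid M]
    [Module R M] : Submodule R M :=
  ⨆ g : I →ₗ[R] M, LinearMap.range g

namespace Ideal

section traceIn

variable {R M : Type*} [CommSemiring R] [AddCommMonoid M] [Module R M] (I : Ideal R)

theorem range_le_traceIn (g : I →ₗ[R] M) : LinearMap.range g ≤ I.traceIn M :=
  le_iSup (fun g : I →ₗ[R] M => LinearMap.range g) g

theorem smul_top_le_traceIn : I • (⊤ : Submodule R M) ≤ I.traceIn M :=
  Submodule.smul_le.mpr fun r hr m _ =>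
    I.range_le_traceIn (LinearMap.toSpanSingleton R M m ∘ₗ I.subtype) ⟨⟨r, hr⟩, rfl⟩

end traceIn

section toMap

variable {R : Type*} (A : Type*) [CommSemiring R] [CommSemiring A] [Algebra R A] (I : Ideal R)

def toMap : I →ₗ[R] (I.map (algebraMap R A)).restrictScalars R :=
  (Algebra.linearMap R A).restrict fun _ hi => mem_map_of_mem _ hi

variable {A I} in
theorem range_le_of_forall_toMap_mem {P : Type*} [AddCommMonoid P] [Module A P]
    {N : Submodule A P} (g : I.map (algebraMap R A) →ₗ[A] P) (hg : ∀ i, g (I.toMap A i) ∈ N) :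
    LinearMap.range g ≤ N := by
  rintro _ ⟨y, rfl⟩
  have hle : I.map (algebraMap R A) ≤ (N.comap g).map (I.map (algebraMap R A)).subtype :=
    map_le_iff_le_comap.mpr fun i hi => ⟨_, hg ⟨i, hi⟩, rfl⟩
  obtain ⟨z, hz, hzy⟩ := hle y.2
  exact (Subtype.ext hzy : z = y) ▸ hz

instance isLocalizedModule_toMap (S : Submonoid R) [IsLocalization S A] :
    IsLocalizedModule S (I.toMap A) :=
  IsLocalizedModule.of_linearEquiv S (Submodule.toLocalized' A S (Algebra.linearMap R A) I)
    ((LinearEquiv.ofEq _ _ (localized'_eq_map A S I)).restrictScalars R)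

end toMap

end Ideal

section Localization

variable {R Rₛ M Mₛ : Type*} [CommRing R] [CommRing Rₛ] [Algebra R Rₛ]
  [AddCommGroup M] [Module R M] [AddCommGroup Mₛ] [Module R Mₛ] [Module Rₛ Mₛ]
  [IsScalarTower R Rₛ Mₛ]

theorem Ideal.traceIn_le_comap_traceIn_map (I : Ideal R) (S : Submonoid R) [IsLocalization S Rₛ]
    (f : M →ₗ[R] Mₛ) [IsLocalizedModule S f] :
    I.traceIn M ≤
      Submodule.comap f (((I.map (algebraMap R Rₛ)).traceIn Mₛ).restrictScalars R) := by
  refine iSup_le fun g => ?_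
  rintro _ ⟨i, rfl⟩
  let gₛ := IsLocalizedModule.mapExtendScalars S (I.toMap Rₛ) f Rₛ g
  have hgₛ : gₛ (I.toMap Rₛ i) = f (g i) := IsLocalizedModule.map_apply S _ f g i
  rw [Submodule.mem_comap, Submodule.restrictScalars_mem, ← hgₛ]
  exact (I.map (algebraMap R Rₛ)).range_le_traceIn gₛ ⟨_, rfl⟩

variable (S : Submonoid R) [IsLocalization S Rₛ] (f : M →ₗ[R] Mₛ) [IsLocalizedModule S f]

namespace Submodule

theorem localized'_ideal_smul_top (I : Ideal R) :
    (I • ⊤ : Submodule R M).localized' Rₛ S f = I.map (algebraMap R Rₛ) • ⊤ := by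
  rw [localized'_smul, Ideal.localized'_eq_map, localized'_top]

variable {S f} in
theorem exists_smul_mem_of_apply_mem_localized' {N : Submodule R M} {m : M}
    (hm : f m ∈ N.localized' Rₛ S f) : ∃ s : S, s • m ∈ N := by
  obtain ⟨n, hn, s, hs⟩ := hm
  obtain ⟨t, ht⟩ := IsLocalizedModule.exists_of_eq (S := S) (f := f)
    (show f ((s : R) • m) = f n by
      rw [map_smul, ← hs, ← Submonoid.smul_def, IsLocalizedModule.mk'_cancel'])
  refine ⟨t * s, ?_⟩
  rw [Submonoid.smul_def, Submonoid.coe_mul, mul_smul, ← Submonoid.smul_def, ht]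
  exact N.smul_of_tower_mem t hn

end Submodule

theorem Ideal.traceIn_map_le_localized'_traceIn (I : Ideal R) [Module.FinitePresentation R I] :
    (I.map (algebraMap R Rₛ)).traceIn Mₛ ≤ (I.traceIn M).localized' Rₛ S f := by
  refine iSup_le fun g => range_le_of_forall_toMap_mem g fun i => ?_
  obtain ⟨h, s, hh⟩ := Module.FinitePresentation.exists_lift_of_isLocalizedModule S f
    ((g.restrictScalars R) ∘ₗ I.toMap Rₛ)
  have hs : s • g (I.toMap Rₛ i) = f (h i) := (LinearMap.congr_fun hh i).symm
  rw [← IsLocalization.smul_mem_iff (S := S), hs]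
  exact ⟨h i, I.range_le_traceIn h ⟨i, rfl⟩, 1, IsLocalizedModule.mk'_one S f _⟩

end Localization

theorem iExcellent_localization_general
    {R : Type u} [CommRing R] [IsNoetherianRing R]
    (I : Ideal R) (M : Type u) [AddCommGroup M] [Module R M]
    (p : Ideal R) [p.IsPrime] :
    ((I • (⊤ : Submodule R M) = ⨆ f : I →ₗ[R] M, LinearMap.range f) →
      I.map (algebraMap R (Localization.AtPrime p)) •
          (⊤ : Submodule (Localization.AtPrime p) (LocalizedModule p.primeCompl M)) =
        ⨆ f : ↥(I.map (algebraMap R (Localization.AtPrime p)))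
            →ₗ[Localization.AtPrime p] LocalizedModule p.primeCompl M,
          LinearMap.range f) ∧
    ((I.map (algebraMap R (Localization.AtPrime p)) •
          (⊤ : Submodule (Localization.AtPrime p) (LocalizedModule p.primeCompl M)) =
        ⨆ f : ↥(I.map (algebraMap R (Localization.AtPrime p)))
            →ₗ[Localization.AtPrime p] LocalizedModule p.primeCompl M,
          LinearMap.range f) →
      (∀ s ∈ p.primeCompl, ∀ x : M ⧸ (I • (⊤ : Submodule R M)), s • x = 0 → x = 0) →
      I • (⊤ : Submodule R M) = ⨆ f : I →ₗ[R] M, LinearMap.range f) := by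
  have : Module.FinitePresentation R I := Module.finitePresentation_of_finite R I
  let f := LocalizedModule.mkLinearMap p.primeCompl M
  have hloc := Submodule.localized'_ideal_smul_top (Rₛ := Localization.AtPrime p) p.primeCompl f I
  constructor
  · intro hM
    refine le_antisymm (I.map _).smul_top_le_traceIn ?_
    calc (I.map _).traceIn _ ≤ (I.traceIn M).localized' _ p.primeCompl f :=
          I.traceIn_map_le_localized'_traceIn _ f
      _ ≤ (I • ⊤ : Submodule R M).localized' _ p.primeCompl f :=
          (Submodule.localized'gi _ _ f).gc.monotone_l hM.ge
      _ = _ := hloc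
  · intro hMₚ hinj
    refine le_antisymm I.smul_top_le_traceIn fun x hx => ?_
    have hfx : f x ∈ (I • ⊤ : Submodule R M).localized' _ p.primeCompl f :=
      hloc ▸ hMₚ.ge (I.traceIn_le_comap_traceIn_map p.primeCompl f hx)
    obtain ⟨s, hs⟩ := Submodule.exists_smul_mem_of_apply_mem_localized' hfx
    rw [← Submodule.Quotient.mk_eq_zero] at hs ⊢
    exact hinj s s.2 _ hs

/-- Lemma 2.3: (a) if `M` is `I`-excellent, then `M_p` is `IR_p`-excellent over `R_p`;
(b) if `M_p` is `IR_p`-excellent and every `s ∈ R \ p` acts injectively on `M/IM`,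
then `M` is `I`-excellent. -/
theorem iExcellent_localization
    {R : Type u} [CommRing R] [IsNoetherianRing R] [IsLocalRing R]
    (I : Ideal R) (M : Type u) [AddCommGroup M] [Module R M]
    (p : Ideal R) [p.IsPrime] :
    ((I • (⊤ : Submodule R M) = ⨆ f : I →ₗ[R] M, LinearMap.range f) →
      I.map (algebraMap R (Localization.AtPrime p)) •
          (⊤ : Submodule (Localization.AtPrime p) (LocalizedModule p.primeCompl M)) =
        ⨆ f : ↥(I.map (algebraMap R (Localization.AtPrime p)))
            →ₗ[Localization.AtPrime p] LocalizedModule p.primeCompl M,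
          LinearMap.range f) ∧
    ((I.map (algebraMap R (Localization.AtPrime p)) •
          (⊤ : Submodule (Localization.AtPrime p) (LocalizedModule p.primeCompl M)) =
        ⨆ f : ↥(I.map (algebraMap R (Localization.AtPrime p)))
            →ₗ[Localization.AtPrime p] LocalizedModule p.primeCompl M,
          LinearMap.range f) →
      (∀ s ∈ p.primeCompl, ∀ x : M ⧸ (I • (⊤ : Submodule R M)), s • x = 0 → x = 0) →
      I • (⊤ : Submodule R M) = ⨆ f : I →ₗ[R] M, LinearMap.range f) :=
  iExcellent_localization_general I M p
end

section
/- Let (R, m) be a commutative noetherian local ring and p a prime ideal of R. Then p is a good ideal, i.e. γ_p(R) = p, if and only if the localization R_p is NOT a discrete valuation ring. -/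
/-!
The trace of `p` exceeds `p` iff some `f : p →ₗ[R] R` takes a value outside `p`. Localizing,
this happens iff some `R_p`-linear map `p R_p → R_p` hits `1`: one direction is localization of
`f`, the other lifts a map on `p R_p` to `Hom_R(p, R)` up to a unit, `p` being finitely
presented. Finally, a map `F` from the maximal ideal `𝔪` of a noetherian local ring `A` with
`F a = 1` forces `𝔪 = (a)` with `a` a non-zero-divisor; by Krull's intersection theorem every
nonzero element of `A` is then a unit times a power of `a`, so `A` is a domain with principal
maximal ideal, i.e. a DVR. Conversely, in a DVR `𝔪 ≅ A`.
-/

open IsLocalRing nonZeroDivisors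

theorem Ideal.iSup_range_eq_self_iff {R : Type*} [CommRing R] (I : Ideal R) :
    (⨆ f : I →ₗ[R] R, LinearMap.range f) = I ↔ ∀ (f : I →ₗ[R] R) (x : I), f x ∈ I := by
  refine ⟨fun h f x => ?_, fun h => le_antisymm (iSup_le fun f => ?_) ?_⟩
  · exact h.le (Submodule.mem_iSup_of_mem f (LinearMap.mem_range_self f x))
  · rintro _ ⟨x, rfl⟩
    exact h f x
  · simpa using le_iSup (fun f : I →ₗ[R] R => LinearMap.range f) I.subtype

section LinearMapToRing

variable {A : Type*} [CommRing A] {I : Ideal A}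

theorem Ideal.eq_span_singleton_of_linearMap_apply_eq_one (F : I →ₗ[A] A) {a : I}
    (ha : F a = 1) : I = Ideal.span {(a : A)} := by
  refine le_antisymm (fun k hk => Ideal.mem_span_singleton'.mpr ⟨F ⟨k, hk⟩, ?_⟩)
    (Ideal.span_le.mpr (Set.singleton_subset_iff.mpr a.2))
  have hcomm : (k : A) • a = (a : A) • (⟨k, hk⟩ : I) := Subtype.ext (mul_comm _ _)
  calc F ⟨k, hk⟩ * a = (a : A) • F ⟨k, hk⟩ := mul_comm _ _
    _ = k * F a := by rw [← map_smul, ← hcomm, map_smul, smul_eq_mul]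
    _ = k := by rw [ha, mul_one]

theorem Ideal.mem_nonZeroDivisors_of_linearMap_apply_eq_one (F : I →ₗ[A] A) {a : I}
    (ha : F a = 1) : (a : A) ∈ A⁰ := by
  refine mem_nonZeroDivisors_iff_right.mpr fun z hz => ?_
  calc z = F (z • a) := by rw [map_smul, ha, smul_eq_mul, mul_one]
    _ = 0 := by rw [show z • a = 0 from Subtype.ext hz, map_zero]

end LinearMapToRing

namespace IsLocalRing

variable {A : Type*} [CommRing A] [IsLocalRing A] [IsNoetherianRing A]

theorem exists_isUnit_mul_pow_of_maximalIdeal_eq_span {a : A}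
    (h : maximalIdeal A = Ideal.span {a}) {x : A} (hx : x ≠ 0) :
    ∃ (u : A) (n : ℕ), IsUnit u ∧ x = u * a ^ n := by
  classical
  have hex : ∃ k, x ∉ maximalIdeal A ^ k := by
    by_contra! hall
    have hmem : x ∈ ⨅ k, maximalIdeal A ^ k := Ideal.mem_iInf.mpr hall
    rw [Ideal.iInf_pow_eq_bot_of_isLocalRing _ (maximalIdeal.isMaximal A).ne_top] at hmem
    exact hx hmem
  obtain ⟨n, hn⟩ : ∃ n, Nat.find hex = n + 1 :=
    Nat.exists_eq_succ_of_ne_zero fun h0 => by simpa [h0] using Nat.find_spec hex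
  have hxn : x ∈ maximalIdeal A ^ n := not_not.mp (Nat.find_min hex (by omega))
  have hxn1 : x ∉ maximalIdeal A ^ (n + 1) := hn ▸ Nat.find_spec hex
  rw [h, Ideal.span_singleton_pow, Ideal.mem_span_singleton'] at hxn hxn1
  obtain ⟨u, rfl⟩ := hxn
  refine ⟨u, n, not_not.mp fun hu => ?_, rfl⟩
  have hum : u ∈ Ideal.span {a} := h ▸ (mem_maximalIdeal u).mpr hu
  obtain ⟨d, rfl⟩ := Ideal.mem_span_singleton'.mp hum
  exact hxn1 ⟨d, by ring⟩

theorem isDomain_of_maximalIdeal_eq_span {a : A}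
    (h : maximalIdeal A = Ideal.span {a}) (ha : a ∈ A⁰) : IsDomain A := by
  suffices NoZeroDivisors A from NoZeroDivisors.to_isDomain A
  refine ⟨fun {x y} hxy => or_iff_not_and_not.mpr fun ⟨hx, hy⟩ => ?_⟩
  obtain ⟨u, n, hu, rfl⟩ := exists_isUnit_mul_pow_of_maximalIdeal_eq_span h hx
  obtain ⟨v, m, hv, rfl⟩ := exists_isUnit_mul_pow_of_maximalIdeal_eq_span h hy
  have huv : (u * v) * a ^ (n + m) = 0 := by rw [← hxy]; ring
  exact (hu.mul hv).ne_zero (mem_nonZeroDivisors_iff_right.mp (pow_mem ha _) _ huv)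

theorem exists_linearMap_maximalIdeal_apply_eq_one_iff :
    (∃ (F : maximalIdeal A →ₗ[A] A) (a : maximalIdeal A), F a = 1) ↔
      IsDomain A ∧ IsPrincipalIdealRing A ∧ ¬ IsField A := by
  constructor
  · rintro ⟨F, a, ha⟩
    have hspan := Ideal.eq_span_singleton_of_linearMap_apply_eq_one F ha
    have hreg := Ideal.mem_nonZeroDivisors_of_linearMap_apply_eq_one F ha
    have := isDomain_of_maximalIdeal_eq_span hspan hreg
    have hnf : ¬ IsField A := fun hf =>
      nonZeroDivisors.ne_zero hreg (by simpa [isField_iff_maximalIdeal_eq.mp hf] using a.2)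
    have : IsDiscreteValuationRing A :=
      ((IsDiscreteValuationRing.TFAE A hnf).out 4 0).mp
        (⟨a, hspan⟩ : (maximalIdeal A).IsPrincipal)
    exact ⟨‹_›, inferInstance, hnf⟩
  · rintro ⟨hdom, hpir, hnf⟩
    obtain ⟨π, hπ⟩ := hpir.principal (maximalIdeal A)
    have hπ0 : π ≠ 0 := by
      rintro rfl
      exact hnf (isField_iff_maximalIdeal_eq.mpr (by simpa using hπ))
    exact ⟨(LinearEquiv.coord A A π hπ0).toLinearMap ∘ₗ (LinearEquiv.ofEq _ _ hπ).toLinearMap,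
      ⟨π, hπ ▸ Submodule.mem_span_singleton_self π⟩, LinearEquiv.coord_self A A π hπ0⟩

end IsLocalRing

section Localization

variable {R : Type*} [CommRing R] (p : Ideal R) [p.IsPrime]

local notation "Rₚ" => Localization.AtPrime p

theorem Ideal.exists_linearMap_apply_notMem_iff_localized [IsNoetherianRing R] :
    (∃ (f : p →ₗ[R] R) (x : p), f x ∉ p) ↔
      ∃ (F : p.map (algebraMap R Rₚ) →ₗ[Rₚ] Rₚ) (a : p.map (algebraMap R Rₚ)), F a = 1 := by
  have : Module.FinitePresentation R p := Module.finitePresentation_of_finite R p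
  let loc := IsLocalizedModule.mapExtendScalars p.primeCompl (Algebra.idealMap Rₚ p)
    (Algebra.linearMap R Rₚ) Rₚ
  have loc_apply (f : p →ₗ[R] R) (x : p) :
      loc f (Algebra.idealMap Rₚ p x) = algebraMap R Rₚ (f x) := by
    simp [loc, IsLocalizedModule.mapExtendScalars]
  constructor
  · rintro ⟨f, x, hfx⟩
    have hu : IsUnit (algebraMap R Rₚ (f x)) :=
      (IsLocalization.AtPrime.isUnit_to_map_iff Rₚ p (f x)).mpr hfx
    refine ⟨loc f, (↑hu.unit⁻¹ : Rₚ) • Algebra.idealMap Rₚ p x, ?_⟩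
    rw [map_smul, loc_apply, smul_eq_mul, IsUnit.val_inv_mul]
  · rintro ⟨F, a, ha⟩
    obtain ⟨⟨f, s⟩, hfs⟩ := IsLocalizedModule.surj p.primeCompl loc F
    obtain ⟨⟨x, t⟩, hxt⟩ := (IsLocalization.mem_map_algebraMap_iff p.primeCompl Rₚ).mp a.2
    have hx : Algebra.idealMap Rₚ p x = algebraMap R Rₚ t • a :=
      Subtype.ext (by rw [Submodule.coe_smul, smul_eq_mul, mul_comm, hxt]; rfl)
    have hfx : algebraMap R Rₚ (f x) = algebraMap R Rₚ (s * t) := by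
      rw [← loc_apply, ← hfs, LinearMap.smul_apply, hx, map_smul, ha]
      simp [Submonoid.smul_def, Algebra.smul_def]
    exact ⟨f, x, (IsLocalization.AtPrime.isUnit_to_map_iff Rₚ p _).mp
      (hfx ▸ IsLocalization.map_units Rₚ (s * t))⟩

end Localization

theorem prime_good_iff_not_DVR_general
    {R : Type u} [CommRing R] [IsNoetherianRing R]
    (p : Ideal R) [p.IsPrime] :
    (⨆ f : p →ₗ[R] R, LinearMap.range f) = p ↔
      ¬ (IsDomain (Localization.AtPrime p) ∧
          IsPrincipalIdealRing (Localization.AtPrime p) ∧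
          ¬ IsField (Localization.AtPrime p)) := by
  rw [Ideal.iSup_range_eq_self_iff, ← IsLocalRing.exists_linearMap_maximalIdeal_apply_eq_one_iff,
    ← Localization.AtPrime.map_eq_maximalIdeal, ← Ideal.exists_linearMap_apply_notMem_iff_localized]
  simp only [not_exists, not_not]

/-- Satz 2.4: A prime ideal `p` is good, i.e. `γ_p(R) = p`, iff the localization `R_p` is
not a discrete valuation ring (a discrete valuation ring being a local principal ideal
domain which is not a field; `R_p` is always local). -/
theorem prime_good_iff_not_DVR
    {R : Type u} [CommRing R] [IsNoetherianRing R] [IsLocalRing R]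
    (p : Ideal R) [p.IsPrime] :
    (⨆ f : p →ₗ[R] R, LinearMap.range f) = p ↔
      ¬ (IsDomain (Localization.AtPrime p) ∧
          IsPrincipalIdealRing (Localization.AtPrime p) ∧
          ¬ IsField (Localization.AtPrime p)) :=
  prime_good_iff_not_DVR_general p
end

section
/- Let (R, m) be a commutative noetherian local ring. Then R is a quasi-Frobenius ring (i.e. R is artinian and injective as a module over itself) if and only if the socle So(R) = { r ∈ R : m•r = 0 } is nonzero and the endomorphism ring End_R(I) is commutative for every ideal I of R. -/
universe u

section Aux

open IsLocalRing

variable {R : Type u} [CommRing R] [IsLocalRing R]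

local notation "𝔪" => IsLocalRing.maximalIdeal R

theorem aux_essential
    (hcomm : ∀ I : Ideal R, ∀ f g : I →ₗ[R] I, f ∘ₗ g = g ∘ₗ f)
    {s : R} (hs0 : s ≠ 0) (hsm : ∀ a ∈ 𝔪, a * s = 0) :
    ∀ I : Ideal R, I ≠ ⊥ → s ∈ I := by
  intro I hI
  by_contra hsI
  obtain ⟨x, hxI, hx0⟩ := (Submodule.ne_bot_iff I).mp hI
  have hsx : s ∉ Ideal.span {x} :=
    fun h => hsI ((Ideal.span_singleton_le_iff_mem I).mpr hxI h)
  set π : R × R →ₗ[R] R :=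
    (LinearMap.fst R R R).smulRight x + (LinearMap.snd R R R).smulRight s with hπdef
  have hπ : ∀ v : R × R, π v = v.1 * x + v.2 * s := by
    intro v; simp [hπdef, smul_eq_mul]
  set φ : R × R →ₗ[R] R := (LinearMap.fst R R R).smulRight s with hφdef
  set ψ : R × R →ₗ[R] R := (LinearMap.snd R R R).smulRight s with hψdef
  have hφ : ∀ v : R × R, φ v = v.1 * s := by intro v; simp [hφdef, smul_eq_mul]
  have hψ : ∀ v : R × R, ψ v = v.2 * s := by intro v; simp [hψdef, smul_eq_mul]
  set J : Ideal R := LinearMap.range π with hJdef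
  have hker : ∀ v : R × R, π v = 0 → φ v = 0 ∧ ψ v = 0 := by
    rintro ⟨a, b⟩ hv
    rw [hπ] at hv
    have hbs : b * s = 0 := by
      by_cases hbm : b ∈ 𝔪
      · exact hsm b hbm
      · exfalso
        have hu : IsUnit b := by
          by_contra hnu
          exact hbm (IsLocalRing.mem_maximalIdeal b |>.mpr hnu)
        obtain ⟨u, rfl⟩ := hu
        apply hsx
        rw [Ideal.mem_span_singleton']
        refine ⟨-(((u⁻¹ : Rˣ) : R)) * a, ?_⟩
        have : (u : R) * s = -(a * x) := by linear_combination hv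
        calc -(((u⁻¹ : Rˣ) : R)) * a * x = ((u⁻¹ : Rˣ) : R) * -(a * x) := by ring
          _ = ((u⁻¹ : Rˣ) : R) * ((u : R) * s) := by rw [this]
          _ = s := by rw [← mul_assoc, Units.inv_mul, one_mul]
    have hax : a * x = 0 := by linear_combination hv - hbs
    have has : a * s = 0 := by
      by_cases ham : a ∈ 𝔪
      · exact hsm a ham
      · exfalso
        have hu : IsUnit a := by
          by_contra hnu
          exact ham (IsLocalRing.mem_maximalIdeal a |>.mpr hnu)
        obtain ⟨u, rfl⟩ := hu
        apply hx0
        have hx' : x = ((u⁻¹ : Rˣ) : R) * ((u : R) * x) := by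
          rw [← mul_assoc, Units.inv_mul, one_mul]
        rw [hx', hax, mul_zero]
    exact ⟨by rw [hφ]; exact has, by rw [hψ]; exact hbs⟩
  have hφJ : ∀ v : R × R, φ v ∈ J := by
    intro v; exact ⟨(0, v.1), by rw [hπ, hφ]; ring⟩
  have hψJ : ∀ v : R × R, ψ v ∈ J := by
    intro v; exact ⟨(0, v.2), by rw [hπ, hψ]; ring⟩
  set e := π.quotKerEquivRange with hedef
  set G : J →ₗ[R] J :=
    ((LinearMap.ker π).liftQ (φ.codRestrict J hφJ)
      (fun v hv => by
        rw [LinearMap.mem_ker] at hv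
        rw [LinearMap.mem_ker]
        exact Subtype.ext ((hker v hv).1))) ∘ₗ (e.symm : (LinearMap.range π) →ₗ[R] _) with hGdef
  set F : J →ₗ[R] J :=
    ((LinearMap.ker π).liftQ (ψ.codRestrict J hψJ)
      (fun v hv => by
        rw [LinearMap.mem_ker] at hv
        rw [LinearMap.mem_ker]
        exact Subtype.ext ((hker v hv).2))) ∘ₗ (e.symm : (LinearMap.range π) →ₗ[R] _) with hFdef
  have hGeval : ∀ (v : R × R) (h : π v ∈ LinearMap.range π),
      G ⟨π v, h⟩ = ⟨φ v, hφJ v⟩ := by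
    intro v h
    rw [hGdef]
    simp only [LinearMap.coe_comp, Function.comp_apply, LinearEquiv.coe_coe]
    rw [hedef, LinearMap.quotKerEquivRange_symm_apply_image, Submodule.mkQ_apply,
      Submodule.liftQ_apply]
    rfl
  have hFeval : ∀ (v : R × R) (h : π v ∈ LinearMap.range π),
      F ⟨π v, h⟩ = ⟨ψ v, hψJ v⟩ := by
    intro v h
    rw [hFdef]
    simp only [LinearMap.coe_comp, Function.comp_apply, LinearEquiv.coe_coe]
    rw [hedef, LinearMap.quotKerEquivRange_symm_apply_image, Submodule.mkQ_apply,
      Submodule.liftQ_apply]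
    rfl
  have hxJ : x ∈ J := ⟨(1, 0), by rw [hπ]; ring⟩
  set z₀ : J := ⟨x, hxJ⟩ with hz₀
  have hπ10 : π (1, 0) = x := by rw [hπ]; ring
  have hπ01 : π (0, 1) = s := by rw [hπ]; ring
  have hsJ : s ∈ J := ⟨(0, 1), hπ01⟩
  have hGz₀ : G z₀ = ⟨s, hsJ⟩ := by
    have h' : π (1, 0) ∈ LinearMap.range π := ⟨(1, 0), rfl⟩
    have : z₀ = ⟨π (1, 0), h'⟩ := Subtype.ext hπ10.symm
    rw [this, hGeval]
    refine Subtype.ext ?_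
    show φ (1, 0) = s
    rw [hφ]; ring
  have hFz₀ : F z₀ = 0 := by
    have h' : π (1, 0) ∈ LinearMap.range π := ⟨(1, 0), rfl⟩
    have : z₀ = ⟨π (1, 0), h'⟩ := Subtype.ext hπ10.symm
    rw [this, hFeval]
    refine Subtype.ext ?_
    show ψ (1, 0) = (0 : R)
    rw [hψ]; ring
  have hFGz₀ : F (G z₀) = ⟨s, hsJ⟩ := by
    rw [hGz₀]
    have h' : π (0, 1) ∈ LinearMap.range π := ⟨(0, 1), rfl⟩
    have : (⟨s, hsJ⟩ : J) = ⟨π (0, 1), h'⟩ := Subtype.ext hπ01.symm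
    rw [this, hFeval]
    refine Subtype.ext ?_
    show ψ (0, 1) = π (0, 1)
    rw [hψ, hπ01]; exact one_mul s
  have hGFz₀ : G (F z₀) = 0 := by rw [hFz₀, map_zero]
  have hc := hcomm J F G
  have := congrArg (fun (T : J →ₗ[R] J) => T z₀) hc
  simp only [LinearMap.comp_apply] at this
  rw [hFGz₀, hGFz₀] at this
  exact hs0 (by simpa using congrArg (fun (z : J) => (z : R)) this)


theorem aux_artinian_module (M : Type u) [AddCommGroup M] [Module R M] [Module.Finite R M]
    (htor : ∀ r ∈ 𝔪, ∀ x : M, r • x = 0) : IsArtinian R M := by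
  have hT : Module.IsTorsionBySet R M ((𝔪 : Ideal R) : Set R) := fun x a => htor a a.2 x
  letI : Module (R ⧸ (𝔪 : Ideal R)) M := hT.module
  haveI : IsScalarTower R (R ⧸ (𝔪 : Ideal R)) M := hT.isScalarTower
  haveI : Module.Finite (R ⧸ (𝔪 : Ideal R)) M :=
    Module.Finite.of_restrictScalars_finite R (R ⧸ (𝔪 : Ideal R)) M
  letI : Field (R ⧸ (𝔪 : Ideal R)) := Ideal.Quotient.field 𝔪
  haveI hart : IsArtinian (R ⧸ (𝔪 : Ideal R)) M := inferInstance
  let g : Submodule R M → Submodule (R ⧸ (𝔪 : Ideal R)) M := fun p =>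
    { carrier := p
      add_mem' := fun ha hb => p.add_mem ha hb
      zero_mem' := p.zero_mem
      smul_mem' := by
        intro c x hx
        obtain ⟨r, rfl⟩ := Ideal.Quotient.mk_surjective c
        show (Ideal.Quotient.mk 𝔪 r) • x ∈ p
        rw [hT.mk_smul]
        exact p.smul_mem r hx }
  have hmem : ∀ (p : Submodule R M) (x : M), x ∈ g p ↔ x ∈ p := fun p x => Iff.rfl
  have hg : StrictMono g := by
    intro p q hpq
    refine lt_of_le_of_ne (fun x hx => hpq.le hx) (fun e => hpq.ne ?_)
    have h' : SetLike.coe (g p) = SetLike.coe (g q) := congrArg SetLike.coe e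
    exact SetLike.coe_injective (A := Submodule R M) h'
  exact hg.wellFoundedLT

theorem aux_artinian_s18 [IsNoetherianRing R] {n : ℕ} (h : (𝔪 : Ideal R) ^ n = ⊥) :
    IsArtinianRing R := by
  have key : ∀ k : ℕ, IsArtinian R (R ⧸ ((𝔪 : Ideal R) ^ k : Ideal R)) := by
    intro k
    induction k with
    | zero =>
      haveI : Subsingleton (R ⧸ ((𝔪 : Ideal R) ^ 0 : Ideal R)) := by
        apply Submodule.Quotient.subsingleton_iff.mpr
        rw [pow_zero, Ideal.one_eq_top]
      infer_instance
    | succ k ih =>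
      set Q := R ⧸ ((𝔪 : Ideal R) ^ (k + 1) : Ideal R) with hQ
      set N : Submodule R Q :=
        Submodule.map ((𝔪 : Ideal R) ^ (k + 1) : Ideal R).mkQ ((𝔪 : Ideal R) ^ k : Ideal R)
          with hN
      have hle : ((𝔪 : Ideal R) ^ (k + 1) : Ideal R) ≤ (𝔪 : Ideal R) ^ k :=
        Ideal.pow_le_pow_right (Nat.le_succ k)
      have e := Submodule.quotientQuotientEquivQuotient
        ((𝔪 : Ideal R) ^ (k + 1) : Ideal R) ((𝔪 : Ideal R) ^ k : Ideal R) hle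
      haveI h1 : IsArtinian R (Q ⧸ N) := isArtinian_of_linearEquiv e.symm
      haveI h2 : IsArtinian R N := by
        haveI : Module.Finite R N := by
          apply Module.Finite.iff_fg.mpr
          exact Submodule.FG.map _ (IsNoetherian.noetherian _)
        apply aux_artinian_module
        intro r hr x
        obtain ⟨x, hx⟩ := x
        obtain ⟨y, hy, rfl⟩ := hx
        refine Subtype.ext ?_
        show r • (Submodule.mkQ _ y) = 0
        rw [← map_smul, Submodule.mkQ_apply, Submodule.Quotient.mk_eq_zero]
        have : y * r ∈ ((𝔪 : Ideal R) ^ k) * 𝔪 := Ideal.mul_mem_mul hy hr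
        rw [← pow_succ] at this
        simpa [smul_eq_mul, mul_comm] using this
      exact (isArtinian_iff_submodule_quotient N).mpr ⟨h2, h1⟩
  haveI := key n
  exact isArtinian_of_linearEquiv (Submodule.quotEquivOfEqBot ((𝔪 : Ideal R) ^ n) h)


theorem aux_socle_le {s : R} (hs0 : s ≠ 0)
    (hess : ∀ I : Ideal R, I ≠ ⊥ → s ∈ I)
    {w : R} (hw : ∀ a ∈ 𝔪, a * w = 0) : w ∈ Ideal.span {s} := by
  by_cases hw0 : w = 0
  · rw [hw0]; exact Ideal.zero_mem _
  · have hmem : s ∈ Ideal.span {w} :=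
      hess _ (by simpa [Ideal.span_singleton_eq_bot] using hw0)
    rw [Ideal.mem_span_singleton'] at hmem
    obtain ⟨c, hc⟩ := hmem
    have hcu : IsUnit c := by
      by_contra hnu
      exact hs0 (by rw [← hc]; exact hw c ((IsLocalRing.mem_maximalIdeal c).mpr hnu))
    obtain ⟨u, rfl⟩ := hcu
    rw [Ideal.mem_span_singleton']
    exact ⟨((u⁻¹ : Rˣ) : R), by rw [← hc, ← mul_assoc, Units.inv_mul, one_mul]⟩

theorem aux_nomid [IsNoetherianRing R]
    {s : R} (hs0 : s ≠ 0) (hess : ∀ I : Ideal R, I ≠ ⊥ → s ∈ I)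
    (hsm : ∀ a ∈ 𝔪, a * s = 0)
    {U V : Ideal R} (hUV : U ⋖ V) {C : Ideal R}
    (h1 : Submodule.annihilator V ≤ C) (h2 : C ≤ Submodule.annihilator U) :
    C = Submodule.annihilator V ∨ C = Submodule.annihilator U := by
  obtain ⟨x, hxV, hxU⟩ := SetLike.exists_of_lt hUV.lt
  have hVx : U ⊔ Ideal.span {x} = V := by
    have hlt : U < U ⊔ Ideal.span {x} :=
      left_lt_sup.mpr (fun hle => hxU (hle (Ideal.subset_span rfl)))
    have hle : U ⊔ Ideal.span {x} ≤ V :=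
      sup_le hUV.le ((Ideal.span_singleton_le_iff_mem V).mpr hxV)
    exact hle.lt_or_eq.resolve_left (hUV.2 hlt)
  have hsmul : (𝔪 : Ideal R) • V ≤ U := by
    by_cases hWU : (𝔪 : Ideal R) • V ⊔ U = U
    · exact le_sup_left.trans hWU.le
    · exfalso
      have hUW : U < (𝔪 : Ideal R) • V ⊔ U :=
        lt_of_le_of_ne le_sup_right (fun e => hWU e.symm)
      have hWV : (𝔪 : Ideal R) • V ⊔ U ≤ V := sup_le Submodule.smul_le_right hUV.le
      have hWeq : (𝔪 : Ideal R) • V ⊔ U = V := hWV.lt_or_eq.resolve_left (hUV.2 hUW)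
      have hVle : V ≤ U := by
        refine Submodule.le_of_le_smul_of_le_jacobson_bot (I := (𝔪 : Ideal R)) (IsNoetherian.noetherian V) ?_ ?_
        · exact (IsLocalRing.jacobson_eq_maximalIdeal ⊥ bot_ne_top).ge
        · rw [sup_comm] at hWeq
          exact hWeq.ge
      exact hUV.lt.not_ge hVle
  have hmxU : ∀ a ∈ 𝔪, a * x ∈ U := fun a ha => by
    have := Submodule.smul_mem_smul ha hxV
    rw [smul_eq_mul] at this
    exact hsmul this
  have hdec : ∀ v ∈ V, ∃ u ∈ U, ∃ c : R, v = u + c * x := by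
    intro v hv
    rw [← hVx] at hv
    obtain ⟨u, hu, z, hz, rfl⟩ := Submodule.mem_sup.mp hv
    rw [Ideal.mem_span_singleton'] at hz
    obtain ⟨c, rfl⟩ := hz
    exact ⟨u, hu, c, rfl⟩
  by_cases hC : C = Submodule.annihilator V
  · exact Or.inl hC
  right
  have hlt : Submodule.annihilator V < C := lt_of_le_of_ne h1 (fun e => hC e.symm)
  obtain ⟨t, htC, htV⟩ := SetLike.exists_of_lt hlt
  have htU : ∀ u ∈ U, t * u = 0 := fun u hu => by
    have := Submodule.mem_annihilator.mp (h2 htC) u hu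
    rwa [smul_eq_mul] at this
  have htx : t * x ≠ 0 := by
    intro h0
    apply htV
    rw [Submodule.mem_annihilator]
    intro v hv
    obtain ⟨u, hu, c, rfl⟩ := hdec v hv
    rw [smul_eq_mul]
    have hexp : t * (u + c * x) = t * u + c * (t * x) := by ring
    rw [hexp, htU u hu, h0, mul_zero, add_zero]
  have hstx : s ∈ Ideal.span {t * x} :=
    hess _ (by simpa [Ideal.span_singleton_eq_bot] using htx)
  rw [Ideal.mem_span_singleton'] at hstx
  obtain ⟨d, hd⟩ := hstx
  have hannU : Submodule.annihilator U ≤ C := by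
    intro t' ht'
    have ht'U : ∀ u ∈ U, t' * u = 0 := fun u hu => by
      have := Submodule.mem_annihilator.mp ht' u hu
      rwa [smul_eq_mul] at this
    have ht'x : t' * x ∈ Ideal.span {s} := by
      apply aux_socle_le hs0 hess
      intro a ha
      have h' : t' * (a * x) = 0 := ht'U _ (hmxU a ha)
      calc a * (t' * x) = t' * (a * x) := by ring
        _ = 0 := h'
    rw [Ideal.mem_span_singleton'] at ht'x
    obtain ⟨e, he⟩ := ht'x
    set t₂ := t' - e * d * t with ht₂
    have ht₂x : t₂ * x = 0 := by
      rw [ht₂]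
      linear_combination (-1 : R) * he - e * hd
    have ht₂V : t₂ ∈ Submodule.annihilator V := by
      rw [Submodule.mem_annihilator]
      intro v hv
      obtain ⟨u, hu, c, rfl⟩ := hdec v hv
      have ht₂U : t₂ * u = 0 := by
        rw [ht₂]
        linear_combination ht'U u hu - e * d * htU u hu
      rw [smul_eq_mul]
      have hexp : t₂ * (u + c * x) = t₂ * u + c * (t₂ * x) := by ring
      rw [hexp, ht₂U, ht₂x, mul_zero, add_zero]
    have hrw : t' = t₂ + e * d * t := by rw [ht₂]; ring
    rw [hrw]
    exact C.add_mem (h1 ht₂V) (Ideal.mul_mem_left _ _ htC)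
  exact le_antisymm h2 hannU


theorem aux_doubleann [IsNoetherianRing R] [IsArtinianRing R]
    {s : R} (hs0 : s ≠ 0) (hess : ∀ I : Ideal R, I ≠ ⊥ → s ∈ I)
    (hsm : ∀ a ∈ 𝔪, a * s = 0) (I : Ideal R) :
    Submodule.annihilator (Submodule.annihilator I : Ideal R) = I := by
  have hle : ∀ A : Ideal R, A ≤ Submodule.annihilator (Submodule.annihilator A : Ideal R) := by
    intro A a ha
    rw [Submodule.mem_annihilator]
    intro t ht
    have := Submodule.mem_annihilator.mp ht a ha
    rw [smul_eq_mul] at this ⊢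
    rw [mul_comm]; exact this
  have hanti : ∀ {A B : Ideal R}, A ≤ B →
      Submodule.annihilator B ≤ Submodule.annihilator A := by
    intro A B hAB t ht
    rw [Submodule.mem_annihilator] at ht ⊢
    exact fun n hn => ht n (hAB hn)
  induction I using WellFoundedLT.induction with
  | _ A IH =>
    by_cases hA : A = ⊥
    · subst hA
      have h1 : (Submodule.annihilator (⊥ : Ideal R)) = ⊤ := by
        rw [eq_top_iff]
        intro t _
        rw [Submodule.mem_annihilator]
        intro n hn
        rw [Submodule.mem_bot] at hn
        rw [hn, smul_zero]
      rw [h1, eq_bot_iff]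
      intro t ht
      have := Submodule.mem_annihilator.mp ht 1 Submodule.mem_top
      rw [smul_eq_mul, mul_one] at this
      rw [Submodule.mem_bot]
      exact this
    · have hne : {C : Ideal R | C < A}.Nonempty := ⟨⊥, bot_lt_iff_ne_bot.mpr hA⟩
      obtain ⟨B, hB, hmax⟩ := (set_has_maximal_iff_noetherian.mpr inferInstance) _ hne
      have hcov : B ⋖ A := ⟨hB, fun {c} hBc hcA => hmax c hcA hBc⟩
      have hIH : Submodule.annihilator (Submodule.annihilator B : Ideal R) = B := IH B hB
      have hlt : Submodule.annihilator A < Submodule.annihilator B := by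
        refine lt_of_le_of_ne (hanti hB.le) (fun e => ?_)
        have : A ≤ B := by
          calc A ≤ Submodule.annihilator (Submodule.annihilator A : Ideal R) := hle A
            _ = Submodule.annihilator (Submodule.annihilator B : Ideal R) := by rw [e]
            _ = B := hIH
        exact hB.not_ge this
      have hanncov : Submodule.annihilator A ⋖ Submodule.annihilator B := by
        refine ⟨hlt, fun {c} hc1 hc2 => ?_⟩
        rcases aux_nomid hs0 hess hsm hcov hc1.le hc2.le with rfl | rfl
        · exact lt_irrefl _ hc1
        · exact lt_irrefl _ hc2
      have hApos : Submodule.annihilator (Submodule.annihilator B : Ideal R) ≤ A := hIH.le.trans hB.le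
      rcases aux_nomid hs0 hess hsm hanncov hApos (hle A) with hAB | hAA
      · exact absurd (hAB.trans hIH) hB.ne'
      · exact hAA.symm


theorem aux_baer [IsNoetherianRing R]
    (hda : ∀ I : Ideal R, Submodule.annihilator (Submodule.annihilator I : Ideal R) = I) :
    Module.Baer R R := by
  classical
  have main : ∀ (S : Finset R) (f : (Ideal.span (S : Set R) : Ideal R) →ₗ[R] R),
      ∃ r : R, ∀ (z : R) (hz : z ∈ Ideal.span (S : Set R)), f ⟨z, hz⟩ = r * z := by
    intro S
    induction S using Finset.induction_on with
    | empty =>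
      intro f
      refine ⟨0, fun z hz => ?_⟩
      have hz0 : z = 0 := by
        have := hz
        rw [Finset.coe_empty, Ideal.span_empty, Submodule.mem_bot] at this
        exact this
      have hzero : (⟨z, hz⟩ : (Ideal.span ((∅ : Finset R) : Set R) : Ideal R)) = 0 :=
        Subtype.ext hz0
      rw [hzero, map_zero, hz0, mul_zero]
    | @insert a S haS ih =>
      intro f
      set J : Ideal R := Ideal.span (S : Set R) with hJdef
      have hJI : J ≤ Ideal.span (↑(insert a S) : Set R) := by
        apply Ideal.span_mono
        rw [Finset.coe_insert]
        exact Set.subset_insert _ _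
      obtain ⟨b, hb⟩ := ih (f ∘ₗ Submodule.inclusion hJI)
      have haI : a ∈ Ideal.span (↑(insert a S) : Set R) := by
        apply Ideal.subset_span
        rw [Finset.coe_insert]
        exact Set.mem_insert _ _
      have hb' : ∀ (z : R) (hz : z ∈ J), f ⟨z, hJI hz⟩ = b * z := by
        intro z hz
        exact hb z hz
      set y : R := f ⟨a, haI⟩ - b * a with hydef
      set T : Ideal R := Submodule.comap (LinearMap.toSpanSingleton R R a) J with hTdef
      have hTmem : ∀ c : R, c ∈ T ↔ c * a ∈ J := by
        intro c
        rw [hTdef, Submodule.mem_comap, LinearMap.toSpanSingleton_apply, smul_eq_mul]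
      set K : Ideal R := Submodule.annihilator J with hKdef
      set aK : Ideal R := Submodule.map (LinearMap.toSpanSingleton R R a) K with haKdef
      have hTeq : T = Submodule.annihilator aK := by
        ext c
        rw [hTmem c, Submodule.mem_annihilator]
        constructor
        · intro hc z hz
          obtain ⟨k, hk, rfl⟩ := hz
          rw [LinearMap.toSpanSingleton_apply, smul_eq_mul, smul_eq_mul]
          have hk' := Submodule.mem_annihilator.mp hk _ hc
          rw [smul_eq_mul] at hk'
          linear_combination hk'
        · intro hc
          rw [← hda J, Submodule.mem_annihilator]
          intro k hk
          have h' := hc (LinearMap.toSpanSingleton R R a k) (Submodule.mem_map_of_mem hk)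
          rw [LinearMap.toSpanSingleton_apply, smul_eq_mul, smul_eq_mul] at h'
          rw [smul_eq_mul]
          linear_combination h'
      have hyT : ∀ c ∈ T, c * y = 0 := by
        intro c hc
        have hcaJ : c * a ∈ J := (hTmem c).mp hc
        have h2 : (⟨c * a, hJI hcaJ⟩ :
            (Ideal.span (↑(insert a S) : Set R) : Ideal R)) = c • ⟨a, haI⟩ := by
          refine Subtype.ext ?_
          show c * a = c • a
          rw [smul_eq_mul]
        have h1 : f ⟨c * a, hJI hcaJ⟩ = b * (c * a) := hb' (c * a) hcaJ
        rw [hydef]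
        calc c * (f ⟨a, haI⟩ - b * a)
            = c * f ⟨a, haI⟩ - b * (c * a) := by ring
          _ = f (c • ⟨a, haI⟩) - b * (c * a) := by rw [map_smul, smul_eq_mul]
          _ = f ⟨c * a, hJI hcaJ⟩ - b * (c * a) := by rw [← h2]
          _ = 0 := by rw [h1]; ring
      have hyann : y ∈ Submodule.annihilator T := by
        rw [Submodule.mem_annihilator]
        intro c hc
        rw [smul_eq_mul, mul_comm]
        exact hyT c hc
      rw [hTeq, hda] at hyann
      obtain ⟨k, hkK, hka⟩ := hyann
      rw [LinearMap.toSpanSingleton_apply, smul_eq_mul] at hka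
      refine ⟨b + k, ?_⟩
      intro z hz
      have hz' : z ∈ Submodule.span R (insert a (S : Set R)) := by
        rw [← Finset.coe_insert]
        exact hz
      obtain ⟨c, w, hw, hzeq⟩ := Submodule.mem_span_insert.mp hz'
      have hwJ : w ∈ J := hw
      have hdecz : (⟨z, hz⟩ :
          (Ideal.span (↑(insert a S) : Set R) : Ideal R)) =
          c • ⟨a, haI⟩ + ⟨w, hJI hwJ⟩ := by
        refine Subtype.ext ?_
        show z = c • a + w
        exact hzeq
      have hkw : k * w = 0 := by
        have := Submodule.mem_annihilator.mp hkK w hwJ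
        rwa [smul_eq_mul] at this
      rw [hdecz, map_add, map_smul]
      show c • f ⟨a, haI⟩ + f ⟨w, hJI hwJ⟩ = (b + k) * z
      rw [hb' w hwJ, smul_eq_mul, hzeq]
      have hfa : f ⟨a, haI⟩ = b * a + y := by rw [hydef]; ring
      rw [hfa, ← hka, smul_eq_mul]
      linear_combination (-1 : R) * hkw
  intro I g
  obtain ⟨S, hS⟩ := IsNoetherian.noetherian I
  subst hS
  obtain ⟨r, hr⟩ := main S g
  refine ⟨LinearMap.toSpanSingleton R R r, fun z hz => ?_⟩
  rw [LinearMap.toSpanSingleton_apply, smul_eq_mul, mul_comm]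
  exact (hr z hz).symm


end Aux

/-- Lemma 2.5: `R` is a quasi-Frobenius ring (artinian and self-injective) iff the socle
`So(R)` is nonzero and the endomorphism ring `End_R(I)` is commutative for every ideal `I`. -/
theorem quasiFrobenius_iff_socle_ne_bot_and_end_commutative
    {R : Type u} [CommRing R] [IsNoetherianRing R] [IsLocalRing R] :
    (IsArtinianRing R ∧ Module.Injective R R) ↔
      ((Submodule.torsionBySet R R ((IsLocalRing.maximalIdeal R : Ideal R) : Set R) : Ideal R)
          ≠ ⊥ ∧
        ∀ I : Ideal R, ∀ f g : I →ₗ[R] I, f ∘ₗ g = g ∘ₗ f) := by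
  classical
  constructor
  · rintro ⟨hart, hinj⟩
    constructor
    · rw [Submodule.ne_bot_iff]
      by_cases hm : (IsLocalRing.maximalIdeal R : Ideal R) = ⊥
      · refine ⟨1, ?_, one_ne_zero⟩
        rw [Submodule.mem_torsionBySet_iff]
        rintro ⟨a, ha⟩
        have ha' : a ∈ (IsLocalRing.maximalIdeal R : Ideal R) := ha
        rw [hm] at ha'
        have : a = 0 := (Submodule.mem_bot R).mp ha'
        simp [this]
      · have hjac : Ideal.jacobson (⊥ : Ideal R) = IsLocalRing.maximalIdeal R :=
          IsLocalRing.jacobson_eq_maximalIdeal ⊥ bot_ne_top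
        obtain ⟨n, hn⟩ := IsArtinianRing.isNilpotent_jacobson_bot (R := R)
        rw [hjac] at hn
        have hex : ∃ k, (IsLocalRing.maximalIdeal R : Ideal R) ^ k = ⊥ :=
          ⟨n, by rw [← Ideal.zero_eq_bot]; exact hn⟩
        set k := Nat.find hex with hk
        have hkspec : (IsLocalRing.maximalIdeal R : Ideal R) ^ k = ⊥ := Nat.find_spec hex
        have hkpos : k ≠ 0 := by
          intro h0
          rw [h0, pow_zero, Ideal.one_eq_top] at hkspec
          exact one_ne_zero ((Submodule.mem_bot R).mp (hkspec ▸ Submodule.mem_top))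
        have hprev : (IsLocalRing.maximalIdeal R : Ideal R) ^ (k - 1) ≠ ⊥ :=
          Nat.find_min hex (Nat.sub_lt (Nat.pos_of_ne_zero hkpos) one_pos)
        obtain ⟨x, hx, hx0⟩ := (Submodule.ne_bot_iff _).mp hprev
        refine ⟨x, ?_, hx0⟩
        rw [Submodule.mem_torsionBySet_iff]
        rintro ⟨a, ha⟩
        have ha' : a ∈ (IsLocalRing.maximalIdeal R : Ideal R) := ha
        have h2 := Ideal.mul_mem_mul ha' hx
        rw [← pow_succ'] at h2
        rw [Nat.sub_add_cancel (Nat.one_le_iff_ne_zero.mpr hkpos)] at h2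
        rw [hkspec] at h2
        show a • x = 0
        rw [smul_eq_mul]
        exact (Submodule.mem_bot R).mp h2
    · intro I f g
      have hbaer : Module.Baer R R := Module.Baer.of_injective hinj
      obtain ⟨Ff, hFf⟩ := hbaer I (I.subtype ∘ₗ f)
      obtain ⟨Fg, hFg⟩ := hbaer I (I.subtype ∘ₗ g)
      have hlin : ∀ (F : R →ₗ[R] R) (z : R), F z = z * F 1 := by
        intro F z
        have h2 := map_smul F z (1 : R)
        rw [smul_eq_mul, mul_one, smul_eq_mul] at h2
        exact h2
      have hf : ∀ w : ↥I, ((f w : ↥I) : R) = (w : R) * Ff 1 := by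
        intro w
        have h1 := hFf (w : R) w.2
        rw [hlin Ff (w : R)] at h1
        exact h1.symm
      have hg : ∀ w : ↥I, ((g w : ↥I) : R) = (w : R) * Fg 1 := by
        intro w
        have h1 := hFg (w : R) w.2
        rw [hlin Fg (w : R)] at h1
        exact h1.symm
      refine LinearMap.ext ?_
      intro w
      rw [LinearMap.comp_apply, LinearMap.comp_apply]
      refine Subtype.ext ?_
      rw [hf (g w), hg (f w), hg w, hf w]
      ring
  · rintro ⟨hsoc, hcomm⟩
    obtain ⟨s, hs, hs0⟩ := (Submodule.ne_bot_iff _).mp hsoc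
    have hsm : ∀ a ∈ (IsLocalRing.maximalIdeal R : Ideal R), a * s = 0 := by
      intro a ha
      have := (Submodule.mem_torsionBySet_iff _ _).mp hs ⟨a, ha⟩
      rwa [smul_eq_mul] at this
    have hess := aux_essential hcomm hs0 hsm
    have hnil : (IsLocalRing.maximalIdeal R : Ideal R) ≤ nilradical R := by
      intro a ha
      rw [mem_nilradical]
      by_contra hna
      have hk : ∀ m : ℕ, s ∈ (IsLocalRing.maximalIdeal R : Ideal R) ^ m := by
        intro m
        have h1 : s ∈ Ideal.span {a ^ m} := hess _ (by
          rw [Ne, Ideal.span_singleton_eq_bot]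
          exact fun h => hna ⟨m, h⟩)
        exact (Ideal.span_singleton_le_iff_mem _).mpr (Ideal.pow_mem_pow ha m) h1
      have hbot : s ∈ (⊥ : Ideal R) := by
        rw [← Ideal.iInf_pow_eq_bot_of_isLocalRing (IsLocalRing.maximalIdeal R)
          (Ideal.IsMaximal.ne_top inferInstance)]
        exact (Submodule.mem_iInf _).mpr hk
      exact hs0 ((Submodule.mem_bot R).mp hbot)
    obtain ⟨n, hn⟩ := IsNoetherianRing.isNilpotent_nilradical R
    have hmn : (IsLocalRing.maximalIdeal R : Ideal R) ^ n = ⊥ := by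
      have h1 : (IsLocalRing.maximalIdeal R : Ideal R) ^ n ≤ nilradical R ^ n :=
        Ideal.pow_right_mono hnil n
      rw [hn, Ideal.zero_eq_bot] at h1
      exact le_bot_iff.mp h1
    haveI hart : IsArtinianRing R := aux_artinian_s18 hmn
    have hda := aux_doubleann hs0 hess hsm
    exact ⟨hart, (aux_baer hda).injective⟩
end
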